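/- arXiv:2205.14973 — 3 statements merged into one kernel-verified Lean document; each statement's English description precedes it below -/
import Mathlib

section
/- Let N ≥ 1, let g be a metric on ℝ^N, K a smooth symmetric 2-tensor field, Υ a smooth vector field, Ω : ℝ^N → ℝ smooth, and m, κ ∈ ℝ with κ ≠ 0. Suppose the disformal equation (L_Υ g)_{μν}(x) = 2Ω(x)(g_{μν}(x) + (m²/κ)K_{μν}(x)) holds for all x ∈ ℝ^N and all μ,ν. Define on ℝ^N × ℝ^N the functions H(x,p) = Σ_{μ,ν} g^{μν}(x)p_μ p_ν + m² and I(x,p) = Σ_μ Υ^μ(x)p_μ, and set K^{μν} = Σ_{α,β} g^{μα} g^{νβ} K_{αβ}. Then at every point (x,p) satisfying Σ_{μ,ν} K^{μν}(x)p_μ p_ν = κ one has {I,H}(x,p) = 2Ω(x)·H(x,p); in particular {I,H}(x,p) = 0 whenever in addition H(x,p) = 0. -/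
/-- Partial derivative of a scalar function on ℝ^N in the i-th coordinate direction. -/
noncomputable def pd {N : ℕ} (f : (Fin N → ℝ) → ℝ) (i : Fin N) (x : Fin N → ℝ) : ℝ :=
  fderiv ℝ f x (Pi.single i 1)

/-- Lie derivative of a covariant 2-tensor field `T` along the vector field `V`. -/
noncomputable def lieD {N : ℕ} (V : (Fin N → ℝ) → Fin N → ℝ)
    (T : (Fin N → ℝ) → Fin N → Fin N → ℝ) (x : Fin N → ℝ) (μ ν : Fin N) : ℝ :=
  ∑ σ, (V x σ * pd (fun y => T y μ ν) σ x
    + T x σ ν * pd (fun y => V y σ) μ x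
    + T x μ σ * pd (fun y => V y σ) ν x)

/-- Canonical Poisson bracket of functions on ℝ^N × ℝ^N (coordinates (x,p)). -/
noncomputable def poisson {N : ℕ} (F G : (Fin N → ℝ) → (Fin N → ℝ) → ℝ)
    (x p : Fin N → ℝ) : ℝ :=
  ∑ σ, (pd (fun y => F y p) σ x * pd (fun q => G x q) σ p
    - pd (fun q => F x q) σ p * pd (fun y => G y p) σ x)



variable {N : ℕ}

lemma diff_proj (μ : Fin N) : Differentiable ℝ (fun q : Fin N → ℝ => q μ) :=
  (ContinuousLinearMap.proj μ : (Fin N → ℝ) →L[ℝ] ℝ).differentiable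

lemma pd_proj (μ σ : Fin N) (p : Fin N → ℝ) :
    pd (fun q => q μ) σ p = if μ = σ then 1 else 0 := by
  have : fderiv ℝ (fun q : Fin N → ℝ => q μ) p
      = (ContinuousLinearMap.proj μ : (Fin N → ℝ) →L[ℝ] ℝ) :=
    (ContinuousLinearMap.proj μ : (Fin N → ℝ) →L[ℝ] ℝ).fderiv
  simp [pd, this, Pi.single_apply]

lemma pd_sum {ι : Type*} (s : Finset ι) (f : ι → (Fin N → ℝ) → ℝ) (σ : Fin N) (x : Fin N → ℝ)
    (h : ∀ i ∈ s, DifferentiableAt ℝ (f i) x) :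
    pd (fun y => ∑ i ∈ s, f i y) σ x = ∑ i ∈ s, pd (f i) σ x := by
  unfold pd; rw [fderiv_fun_sum h]; simp

lemma pd_mul (f g : (Fin N → ℝ) → ℝ) (σ : Fin N) (x : Fin N → ℝ)
    (hf : DifferentiableAt ℝ f x) (hg : DifferentiableAt ℝ g x) :
    pd (fun y => f y * g y) σ x = pd f σ x * g x + f x * pd g σ x := by
  unfold pd; rw [fderiv_fun_mul hf hg]; simp; ring

lemma pd_mul_const (f : (Fin N → ℝ) → ℝ) (c : ℝ) (σ : Fin N) (x : Fin N → ℝ)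
    (hf : DifferentiableAt ℝ f x) :
    pd (fun y => f y * c) σ x = pd f σ x * c := by
  unfold pd; rw [fderiv_mul_const hf]; simp; ring

lemma pd_add_const (f : (Fin N → ℝ) → ℝ) (c : ℝ) (σ : Fin N) (x : Fin N → ℝ) :
    pd (fun y => f y + c) σ x = pd f σ x := by
  unfold pd; rw [fderiv_add_const]

lemma pd_const_mul (f : (Fin N → ℝ) → ℝ) (c : ℝ) (σ : Fin N) (x : Fin N → ℝ)
    (hf : DifferentiableAt ℝ f x) :
    pd (fun y => c * f y) σ x = c * pd f σ x := by
  unfold pd; rw [fderiv_const_mul hf]; simp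


variable {N : ℕ}

lemma sum_comm3 (f : Fin N → Fin N → Fin N → ℝ) :
    (∑ a, ∑ b, ∑ c, f a b c) = ∑ c, ∑ a, ∑ b, f a b c := by
  calc (∑ a, ∑ b, ∑ c, f a b c)
      = ∑ a, ∑ c, ∑ b, f a b c := Finset.sum_congr rfl fun a _ => Finset.sum_comm
    _ = ∑ c, ∑ a, ∑ b, f a b c := Finset.sum_comm

lemma sum_comm3' (f : Fin N → Fin N → Fin N → ℝ) :
    (∑ a, ∑ b, ∑ c, f a b c) = ∑ b, ∑ c, ∑ a, f a b c :=
  (sum_comm3 fun b c a => f a b c).symm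

lemma sum_comm4 (f : Fin N → Fin N → Fin N → Fin N → ℝ) :
    (∑ a, ∑ b, ∑ c, ∑ d, f a b c d) = ∑ c, ∑ d, ∑ a, ∑ b, f a b c d := by
  calc (∑ a, ∑ b, ∑ c, ∑ d, f a b c d)
      = ∑ a, ∑ c, ∑ d, ∑ b, f a b c d :=
        Finset.sum_congr rfl fun a _ => sum_comm3' _
    _ = ∑ c, ∑ a, ∑ d, ∑ b, f a b c d := Finset.sum_comm
    _ = ∑ c, ∑ d, ∑ a, ∑ b, f a b c d :=
        Finset.sum_congr rfl fun c _ => Finset.sum_comm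


lemma contract_right (G Gi : Fin N → Fin N → ℝ) (p q : Fin N → ℝ)
    (hq : ∀ α, q α = ∑ μ, Gi α μ * p μ)
    (hinv : ∀ μ ν, (∑ σ, G μ σ * Gi σ ν) = if μ = ν then (1:ℝ) else 0) :
    ∀ σ, (∑ β, q β * G σ β) = p σ := by
  intro σ
  calc (∑ β, q β * G σ β) = ∑ β, ∑ μ, G σ β * Gi β μ * p μ := by
        refine Finset.sum_congr rfl fun β _ => ?_
        rw [hq, Finset.sum_mul]
        exact Finset.sum_congr rfl fun μ _ => by ring
    _ = ∑ μ, ∑ β, G σ β * Gi β μ * p μ := Finset.sum_comm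
    _ = ∑ μ, (∑ β, G σ β * Gi β μ) * p μ :=
        Finset.sum_congr rfl fun μ _ => (Finset.sum_mul _ _ _).symm
    _ = p σ := by simp [hinv, ite_mul]

lemma alg (G Gi dV : Fin N → Fin N → ℝ) (dG dGi : Fin N → Fin N → Fin N → ℝ)
    (V p : Fin N → ℝ) (R : Fin N → Fin N → ℝ) (q : Fin N → ℝ)
    (hq : ∀ α, q α = ∑ μ, Gi α μ * p μ)
    (hGsym : ∀ μ ν, G μ ν = G ν μ)
    (hGisym : ∀ μ ν, Gi μ ν = Gi ν μ)
    (hinv : ∀ μ ν, (∑ σ, G μ σ * Gi σ ν) = if μ = ν then (1:ℝ) else 0)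
    (hR2 : ∀ σ μ ν, (∑ τ, (dG σ μ τ * Gi τ ν + G μ τ * dGi σ τ ν)) = 0)
    (hR3 : ∀ μ ν, (∑ σ, (V σ * dG σ μ ν + G σ ν * dV μ σ + G μ σ * dV ν σ)) = R μ ν) :
    (∑ σ, ((∑ μ, dV σ μ * p μ) * ((∑ ν, Gi σ ν * p ν) + ∑ μ, Gi μ σ * p μ)
      - V σ * ∑ μ, ∑ ν, dGi σ μ ν * p μ * p ν))
    = ∑ α, ∑ β, q α * q β * R α β := by
  -- inverse on the other side
  have hinv' : ∀ μ ν, (∑ σ, Gi μ σ * G σ ν) = if μ = ν then (1:ℝ) else 0 := by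
    intro μ ν
    rw [Finset.sum_congr rfl fun σ _ => by rw [hGisym μ σ, hGsym σ ν, mul_comm]]
    rw [hinv]
    simp [eq_comm]
  -- contraction of q with G gives back p
  have hqG : ∀ σ, (∑ β, q β * G σ β) = p σ := by
    intro σ
    calc (∑ β, q β * G σ β) = ∑ β, ∑ μ, G σ β * Gi β μ * p μ := by
          refine Finset.sum_congr rfl fun β _ => ?_
          rw [hq, Finset.sum_mul]
          exact Finset.sum_congr rfl fun μ _ => by ring
      _ = ∑ μ, ∑ β, G σ β * Gi β μ * p μ := Finset.sum_comm
      _ = ∑ μ, (∑ β, G σ β * Gi β μ) * p μ :=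
          Finset.sum_congr rfl fun μ _ => (Finset.sum_mul _ _ _).symm
      _ = p σ := by simp [hinv, ite_mul]
  -- formula for the derivative of the inverse metric
  have hdGi : ∀ σ α β, dGi σ α β = -∑ μ, (Gi α μ * ∑ τ, dG σ μ τ * Gi τ β) := by
    intro σ α β
    have h2 : ∀ μ, (∑ τ, G μ τ * dGi σ τ β) = -∑ τ, dG σ μ τ * Gi τ β := by
      intro μ
      have h := hR2 σ μ β
      rw [Finset.sum_add_distrib] at h
      linarith
    calc dGi σ α β = ∑ τ, (if α = τ then (1:ℝ) else 0) * dGi σ τ β := by simp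
      _ = ∑ τ, (∑ μ, Gi α μ * G μ τ) * dGi σ τ β := by
          refine Finset.sum_congr rfl fun τ _ => ?_
          rw [hinv']
      _ = ∑ τ, ∑ μ, Gi α μ * (G μ τ * dGi σ τ β) := by
          refine Finset.sum_congr rfl fun τ _ => ?_
          rw [Finset.sum_mul]
          exact Finset.sum_congr rfl fun μ _ => by ring
      _ = ∑ μ, Gi α μ * ∑ τ, G μ τ * dGi σ τ β := by
          rw [Finset.sum_comm]
          exact Finset.sum_congr rfl fun μ _ => (Finset.mul_sum _ _ _).symm
      _ = -∑ μ, (Gi α μ * ∑ τ, dG σ μ τ * Gi τ β) := by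
          rw [← Finset.sum_neg_distrib]
          exact Finset.sum_congr rfl fun μ _ => by rw [h2]; ring
  -- the momentum-space Hessian term
  have hM : ∀ σ, (∑ μ, ∑ ν, dGi σ μ ν * p μ * p ν)
      = -∑ α, ∑ τ, q α * q τ * dG σ α τ := by
    intro σ
    have expand : ∀ μ ν, dGi σ μ ν * p μ * p ν
        = -∑ α, ∑ τ, (Gi α μ * p μ) * ((Gi τ ν * p ν) * dG σ α τ) := by
      intro μ ν
      rw [hdGi σ μ ν, neg_mul, neg_mul, Finset.sum_mul, Finset.sum_mul]
      congr 1
      refine Finset.sum_congr rfl fun α _ => ?_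
      rw [Finset.mul_sum, Finset.sum_mul, Finset.sum_mul]
      refine Finset.sum_congr rfl fun τ _ => ?_
      rw [hGisym α μ]
      ring
    calc (∑ μ, ∑ ν, dGi σ μ ν * p μ * p ν)
        = ∑ μ, ∑ ν, -∑ α, ∑ τ, (Gi α μ * p μ) * ((Gi τ ν * p ν) * dG σ α τ) := by
          exact Finset.sum_congr rfl fun μ _ => Finset.sum_congr rfl fun ν _ => expand μ ν
      _ = -∑ μ, ∑ ν, ∑ α, ∑ τ, (Gi α μ * p μ) * ((Gi τ ν * p ν) * dG σ α τ) := by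
          simp only [Finset.sum_neg_distrib]
      _ = -∑ α, ∑ τ, ∑ μ, ∑ ν, (Gi α μ * p μ) * ((Gi τ ν * p ν) * dG σ α τ) := by
          rw [sum_comm4]
      _ = -∑ α, ∑ τ, q α * q τ * dG σ α τ := by
          congr 1
          refine Finset.sum_congr rfl fun α _ => Finset.sum_congr rfl fun τ _ => ?_
          rw [hq, hq, Finset.sum_mul_sum, Finset.sum_mul]
          refine Finset.sum_congr rfl fun μ _ => ?_
          rw [Finset.sum_mul]
          exact Finset.sum_congr rfl fun ν _ => by ring
  -- symmetrized momentum factor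
  have hB : ∀ σ, ((∑ ν, Gi σ ν * p ν) + ∑ μ, Gi μ σ * p μ) = 2 * q σ := by
    intro σ
    have h1 : (∑ μ, Gi μ σ * p μ) = ∑ μ, Gi σ μ * p μ :=
      Finset.sum_congr rfl fun μ _ => by rw [hGisym μ σ]
    rw [h1, hq]; ring
  have hSA : (∑ σ, V σ * ∑ α, ∑ τ, q α * q τ * dG σ α τ)
      = ∑ α, ∑ β, ∑ σ, q α * q β * (V σ * dG σ α β) := by
    rw [sum_comm3 (fun α β σ => q α * q β * (V σ * dG σ α β))]
    refine Finset.sum_congr rfl fun σ _ => ?_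
    rw [Finset.mul_sum]
    refine Finset.sum_congr rfl fun α _ => ?_
    rw [Finset.mul_sum]
    exact Finset.sum_congr rfl fun τ _ => by ring
  have hSB : (∑ α, ∑ β, ∑ σ, q α * q β * (G σ β * dV α σ))
      = ∑ a, ∑ b, p b * (q a * dV a b) := by
    refine Finset.sum_congr rfl fun α _ => ?_
    rw [Finset.sum_comm]
    refine Finset.sum_congr rfl fun σ _ => ?_
    calc (∑ β, q α * q β * (G σ β * dV α σ))
        = ∑ β, (q β * G σ β) * (q α * dV α σ) :=
          Finset.sum_congr rfl fun β _ => by ring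
      _ = (∑ β, q β * G σ β) * (q α * dV α σ) := (Finset.sum_mul _ _ _).symm
      _ = p σ * (q α * dV α σ) := by rw [hqG]
  have hSC : (∑ α, ∑ β, ∑ σ, q α * q β * (G α σ * dV β σ))
      = ∑ a, ∑ b, p b * (q a * dV a b) := by
    rw [sum_comm3' (fun α β σ => q α * q β * (G α σ * dV β σ))]
    refine Finset.sum_congr rfl fun β _ => Finset.sum_congr rfl fun σ _ => ?_
    calc (∑ α, q α * q β * (G α σ * dV β σ))
        = ∑ α, (q α * G σ α) * (q β * dV β σ) :=
          Finset.sum_congr rfl fun α _ => by rw [hGsym α σ]; ring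
      _ = (∑ α, q α * G σ α) * (q β * dV β σ) := (Finset.sum_mul _ _ _).symm
      _ = p σ * (q β * dV β σ) := by rw [hqG]
  have hT1 : (∑ σ, (∑ μ, dV σ μ * p μ) * (2 * q σ))
      = (∑ a, ∑ b, p b * (q a * dV a b)) + ∑ a, ∑ b, p b * (q a * dV a b) := by
    calc (∑ σ, (∑ μ, dV σ μ * p μ) * (2 * q σ))
        = ∑ a, ∑ b, (p b * (q a * dV a b) + p b * (q a * dV a b)) := by
          refine Finset.sum_congr rfl fun σ _ => ?_
          rw [Finset.sum_mul]
          exact Finset.sum_congr rfl fun μ _ => by ring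
      _ = _ := by simp only [Finset.sum_add_distrib]
  have hRHS : (∑ α, ∑ β, q α * q β * R α β)
      = ((∑ α, ∑ β, ∑ σ, q α * q β * (V σ * dG σ α β))
      + (∑ α, ∑ β, ∑ σ, q α * q β * (G σ β * dV α σ)))
      + (∑ α, ∑ β, ∑ σ, q α * q β * (G α σ * dV β σ)) := by
    calc (∑ α, ∑ β, q α * q β * R α β)
        = ∑ α, ∑ β, ∑ σ, ((q α * q β * (V σ * dG σ α β)
            + q α * q β * (G σ β * dV α σ)) + q α * q β * (G α σ * dV β σ)) := by
          refine Finset.sum_congr rfl fun α _ => Finset.sum_congr rfl fun β _ => ?_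
          rw [← hR3 α β, Finset.mul_sum]
          exact Finset.sum_congr rfl fun σ _ => by ring
      _ = _ := by simp only [Finset.sum_add_distrib]
  have hLHS : (∑ σ, ((∑ μ, dV σ μ * p μ) * ((∑ ν, Gi σ ν * p ν) + ∑ μ, Gi μ σ * p μ)
      - V σ * ∑ μ, ∑ ν, dGi σ μ ν * p μ * p ν))
      = (∑ σ, (∑ μ, dV σ μ * p μ) * (2 * q σ))
      + ∑ σ, V σ * ∑ α, ∑ τ, q α * q τ * dG σ α τ := by
    calc (∑ σ, ((∑ μ, dV σ μ * p μ) * ((∑ ν, Gi σ ν * p ν) + ∑ μ, Gi μ σ * p μ)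
        - V σ * ∑ μ, ∑ ν, dGi σ μ ν * p μ * p ν))
        = ∑ σ, ((∑ μ, dV σ μ * p μ) * (2 * q σ)
            + V σ * ∑ α, ∑ τ, q α * q τ * dG σ α τ) := by
          refine Finset.sum_congr rfl fun σ _ => ?_
          rw [hB σ, hM σ]; ring
      _ = _ := Finset.sum_add_distrib
  rw [hLHS, hRHS]
  linarith [hSA, hSB, hSC, hT1]

section main
variable {N : ℕ}

theorem stmt0 {N : ℕ} (hN : 1 ≤ N)
    (g ginv K : (Fin N → ℝ) → Fin N → Fin N → ℝ)
    (Υ : (Fin N → ℝ) → Fin N → ℝ) (Ω : (Fin N → ℝ) → ℝ)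
    (m κ₀ : ℝ) (hκ : κ₀ ≠ 0)
    (hg_smooth : ∀ μ ν, ContDiff ℝ (⊤ : ℕ∞) (fun x => g x μ ν))
    (hg_symm : ∀ x μ ν, g x μ ν = g x ν μ)
    (hginv_smooth : ∀ μ ν, ContDiff ℝ (⊤ : ℕ∞) (fun x => ginv x μ ν))
    (hginv_symm : ∀ x μ ν, ginv x μ ν = ginv x ν μ)
    (h_inv : ∀ x μ ν, (∑ σ, g x μ σ * ginv x σ ν) = if μ = ν then (1 : ℝ) else 0)
    (hK_smooth : ∀ μ ν, ContDiff ℝ (⊤ : ℕ∞) (fun x => K x μ ν))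
    (hK_symm : ∀ x μ ν, K x μ ν = K x ν μ)
    (hΥ_smooth : ∀ μ, ContDiff ℝ (⊤ : ℕ∞) (fun x => Υ x μ))
    (hΩ_smooth : ContDiff ℝ (⊤ : ℕ∞) Ω)
    (hdisf : ∀ x μ ν, lieD Υ g x μ ν = 2 * Ω x * (g x μ ν + (m ^ 2 / κ₀) * K x μ ν))
    (H Ich : (Fin N → ℝ) → (Fin N → ℝ) → ℝ)
    (hH : H = fun x p => (∑ μ, ∑ ν, ginv x μ ν * p μ * p ν) + m ^ 2)
    (hI : Ich = fun x p => ∑ μ, Υ x μ * p μ)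
    (Kup : (Fin N → ℝ) → Fin N → Fin N → ℝ)
    (hKup : Kup = fun x μ ν => ∑ α, ∑ β, ginv x μ α * ginv x ν β * K x α β) :
    ∀ x p : Fin N → ℝ, (∑ μ, ∑ ν, Kup x μ ν * p μ * p ν) = κ₀ →
      poisson Ich H x p = 2 * Ω x * H x p ∧ (H x p = 0 → poisson Ich H x p = 0) := by
  intro x p hκeq
  -- differentiability facts
  have dΥ : ∀ μ, DifferentiableAt ℝ (fun y => Υ y μ) x :=
    fun μ => ((hΥ_smooth μ).differentiable (by simp)).differentiableAt
  have dg : ∀ μ ν, DifferentiableAt ℝ (fun y => g y μ ν) x :=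
    fun μ ν => ((hg_smooth μ ν).differentiable (by simp)).differentiableAt
  have dgi : ∀ μ ν, DifferentiableAt ℝ (fun y => ginv y μ ν) x :=
    fun μ ν => ((hginv_smooth μ ν).differentiable (by simp)).differentiableAt
  -- pd computations
  have hpdI_x : ∀ σ, pd (fun y => Ich y p) σ x
      = ∑ μ, pd (fun y => Υ y μ) σ x * p μ := by
    intro σ
    simp only [hI]
    rw [pd_sum _ _ _ _ (fun μ _ => (dΥ μ).mul_const (p μ))]
    exact Finset.sum_congr rfl fun μ _ => pd_mul_const _ _ _ _ (dΥ μ)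
  have hpdI_p : ∀ σ, pd (fun q => Ich x q) σ p = Υ x σ := by
    intro σ
    simp only [hI]
    rw [pd_sum _ _ _ _ (fun μ _ => ((diff_proj μ).differentiableAt).const_mul (Υ x μ))]
    have : ∀ μ : Fin N, pd (fun q : Fin N → ℝ => Υ x μ * q μ) σ p
        = Υ x μ * (if μ = σ then 1 else 0) := by
      intro μ
      rw [pd_const_mul _ _ _ _ (diff_proj μ).differentiableAt, pd_proj]
    rw [Finset.sum_congr rfl fun μ _ => this μ]
    simp
  have hpdH_x : ∀ σ, pd (fun y => H y p) σ x
      = ∑ μ, ∑ ν, pd (fun y => ginv y μ ν) σ x * p μ * p ν := by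
    intro σ
    simp only [hH]
    rw [pd_add_const]
    rw [pd_sum _ _ _ _ (fun μ _ => DifferentiableAt.fun_sum
      (fun ν _ => ((dgi μ ν).mul_const (p μ)).mul_const (p ν)))]
    refine Finset.sum_congr rfl fun μ _ => ?_
    rw [pd_sum _ _ _ _ (fun ν _ => ((dgi μ ν).mul_const (p μ)).mul_const (p ν))]
    refine Finset.sum_congr rfl fun ν _ => ?_
    rw [pd_mul_const _ _ _ _ ((dgi μ ν).mul_const (p μ)),
      pd_mul_const _ _ _ _ (dgi μ ν)]
  have hpdH_p : ∀ σ, pd (fun q => H x q) σ p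
      = (∑ ν, ginv x σ ν * p ν) + ∑ μ, ginv x μ σ * p μ := by
    intro σ
    simp only [hH]
    rw [pd_add_const]
    have dterm : ∀ μ ν, DifferentiableAt ℝ
        (fun q : Fin N → ℝ => ginv x μ ν * q μ * q ν) p :=
      fun μ ν => (((diff_proj μ).differentiableAt).const_mul (ginv x μ ν)).mul
        (diff_proj ν).differentiableAt
    rw [pd_sum _ _ _ _ (fun μ _ => DifferentiableAt.fun_sum (fun ν _ => dterm μ ν))]
    have hterm : ∀ μ ν : Fin N, pd (fun q : Fin N → ℝ => ginv x μ ν * q μ * q ν) σ p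
        = ginv x μ ν * (if μ = σ then 1 else 0) * p ν
          + ginv x μ ν * p μ * (if ν = σ then 1 else 0) := by
      intro μ ν
      rw [pd_mul _ _ _ _ (((diff_proj μ).differentiableAt).const_mul (ginv x μ ν))
        (diff_proj ν).differentiableAt,
        pd_const_mul _ _ _ _ (diff_proj μ).differentiableAt, pd_proj, pd_proj]
    have : (∑ μ, pd (fun q : Fin N → ℝ => ∑ ν, ginv x μ ν * q μ * q ν) σ p)
        = ∑ μ, ∑ ν, (ginv x μ ν * (if μ = σ then 1 else 0) * p ν
          + ginv x μ ν * p μ * (if ν = σ then 1 else 0)) := by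
      refine Finset.sum_congr rfl fun μ _ => ?_
      rw [pd_sum _ _ _ _ (fun ν _ => dterm μ ν)]
      exact Finset.sum_congr rfl fun ν _ => hterm μ ν
    rw [this]
    simp [Finset.sum_add_distrib, mul_ite, ite_mul, Finset.sum_ite_eq, Finset.sum_ite_eq',
      Finset.sum_ite_irrel]
  -- derivative of the inverse relation
  have hR2 : ∀ σ μ ν, (∑ τ, (pd (fun y => g y μ τ) σ x * ginv x τ ν
      + g x μ τ * pd (fun y => ginv y τ ν) σ x)) = 0 := by
    intro σ μ ν
    have hzero : pd (fun y => ∑ τ, g y μ τ * ginv y τ ν) σ x = 0 := by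
      have hfun : (fun y : Fin N → ℝ => ∑ τ, g y μ τ * ginv y τ ν)
          = fun _ => (if μ = ν then (1:ℝ) else 0) := funext fun y => h_inv y μ ν
      simp [pd, hfun]
    rw [pd_sum _ (fun τ y => g y μ τ * ginv y τ ν) _ _ (fun τ _ => (dg μ τ).mul (dgi τ ν))] at hzero
    rw [← hzero]
    exact Finset.sum_congr rfl fun τ _ => (pd_mul _ _ _ _ (dg μ τ) (dgi τ ν)).symm
  -- apply the algebraic lemma
  have hR3 : ∀ μ ν, (∑ σ, (Υ x σ * pd (fun y => g y μ ν) σ x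
      + g x σ ν * pd (fun y => Υ y σ) μ x + g x μ σ * pd (fun y => Υ y σ) ν x))
      = 2 * Ω x * (g x μ ν + (m ^ 2 / κ₀) * K x μ ν) := by
    intro μ ν
    have := hdisf x μ ν
    unfold lieD at this
    exact this
  have hP := alg (g x) (ginv x)
    (fun σ μ => pd (fun y => Υ y μ) σ x)
    (fun σ μ ν => pd (fun y => g y μ ν) σ x)
    (fun σ μ ν => pd (fun y => ginv y μ ν) σ x)
    (Υ x) p (fun α β => 2 * Ω x * (g x α β + (m ^ 2 / κ₀) * K x α β))
    (fun α => ∑ μ, ginv x α μ * p μ) (fun α => rfl)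
    (fun μ ν => hg_symm x μ ν) (fun μ ν => hginv_symm x μ ν)
    (fun μ ν => h_inv x μ ν) hR2 hR3
  set q : Fin N → ℝ := fun α => ∑ μ, ginv x α μ * p μ with hqdef
  have hpoisson : poisson Ich H x p
      = ∑ α, ∑ β, q α * q β * (2 * Ω x * (g x α β + (m ^ 2 / κ₀) * K x α β)) := by
    unfold poisson
    rw [← hP]
    refine Finset.sum_congr rfl fun σ _ => ?_
    rw [hpdI_x σ, hpdI_p σ, hpdH_x σ, hpdH_p σ]
  have hqG : ∀ σ, (∑ β, q β * g x σ β) = p σ :=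
    contract_right (g x) (ginv x) p q (fun α => rfl) (fun μ ν => h_inv x μ ν)
  -- contraction identities
  have hcontrg : (∑ α, ∑ β, q α * q β * g x α β) = ∑ μ, ∑ ν, ginv x μ ν * p μ * p ν := by
    calc (∑ α, ∑ β, q α * q β * g x α β)
        = ∑ α, q α * p α := by
          refine Finset.sum_congr rfl fun α _ => ?_
          rw [← hqG α, Finset.mul_sum]
          exact Finset.sum_congr rfl fun β _ => by ring
      _ = ∑ α, ∑ μ, ginv x α μ * p μ * p α := by
          refine Finset.sum_congr rfl fun α _ => ?_
          rw [hqdef]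
          rw [Finset.sum_mul]
      _ = ∑ μ, ∑ ν, ginv x μ ν * p μ * p ν :=
          Finset.sum_congr rfl fun μ _ => Finset.sum_congr rfl fun ν _ => by ring
  have hcontrK : (∑ α, ∑ β, q α * q β * K x α β) = ∑ μ, ∑ ν, Kup x μ ν * p μ * p ν := by
    calc (∑ α, ∑ β, q α * q β * K x α β)
        = ∑ α, ∑ β, ∑ μ, ∑ ν, (ginv x α μ * p μ) * ((ginv x β ν * p ν) * K x α β) := by
          refine Finset.sum_congr rfl fun α _ => Finset.sum_congr rfl fun β _ => ?_
          rw [hqdef]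
          rw [Finset.sum_mul_sum, Finset.sum_mul]
          refine Finset.sum_congr rfl fun μ _ => ?_
          rw [Finset.sum_mul]
          exact Finset.sum_congr rfl fun ν _ => by ring
      _ = ∑ μ, ∑ ν, ∑ α, ∑ β, (ginv x α μ * p μ) * ((ginv x β ν * p ν) * K x α β) :=
          sum_comm4 _
      _ = ∑ μ, ∑ ν, Kup x μ ν * p μ * p ν := by
          refine Finset.sum_congr rfl fun μ _ => Finset.sum_congr rfl fun ν _ => ?_
          simp only [hKup]
          rw [Finset.sum_mul, Finset.sum_mul]
          refine Finset.sum_congr rfl fun α _ => ?_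
          rw [Finset.sum_mul, Finset.sum_mul]
          refine Finset.sum_congr rfl fun β _ => ?_
          rw [hginv_symm x α μ, hginv_symm x β ν]
          ring
  have hsplit : (∑ α, ∑ β, q α * q β * (2 * Ω x * (g x α β + (m ^ 2 / κ₀) * K x α β)))
      = 2 * Ω x * (∑ α, ∑ β, q α * q β * g x α β)
        + 2 * Ω x * (m ^ 2 / κ₀) * (∑ α, ∑ β, q α * q β * K x α β) := by
    calc (∑ α, ∑ β, q α * q β * (2 * Ω x * (g x α β + (m ^ 2 / κ₀) * K x α β)))
        = ∑ α, ∑ β, (2 * Ω x * (q α * q β * g x α β)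
            + 2 * Ω x * (m ^ 2 / κ₀) * (q α * q β * K x α β)) :=
          Finset.sum_congr rfl fun α _ => Finset.sum_congr rfl fun β _ => by ring
      _ = _ := by
          simp only [Finset.sum_add_distrib, ← Finset.mul_sum]
  have hHval : H x p = (∑ μ, ∑ ν, ginv x μ ν * p μ * p ν) + m ^ 2 := by rw [hH]
  have hfinal : poisson Ich H x p = 2 * Ω x * H x p := by
    rw [hpoisson, hsplit, hcontrg, hcontrK, hκeq, hHval]
    have hc : m ^ 2 / κ₀ * κ₀ = m ^ 2 := div_mul_cancel₀ _ hκ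
    calc 2 * Ω x * (∑ μ, ∑ ν, ginv x μ ν * p μ * p ν)
          + 2 * Ω x * (m ^ 2 / κ₀) * κ₀
        = 2 * Ω x * (∑ μ, ∑ ν, ginv x μ ν * p μ * p ν)
          + 2 * Ω x * (m ^ 2 / κ₀ * κ₀) := by ring
      _ = _ := by rw [hc]; ring
  exact ⟨hfinal, fun h0 => by rw [hfinal, h0, mul_zero]⟩

end main
end

section
/- Let g be a metric on ℝ^N with Christoffel symbols Γ, and let K be a smooth symmetric Killing tensor of g. Let Υ : ℝ^N × ℝ → ℝ^N and Ω : ℝ^N × ℝ → ℝ be smooth and suppose that for every parameter value s ∈ ℝ the vector field x ↦ Υ(x,s) satisfies (L_{Υ(·,s)} g)_{μν}(x) = 2Ω(x,s)(g_{μν}(x) + s·K_{μν}(x)) for all x. Then for every solution (x,n) : I → ℝ^N × ℝ_{>0} of the einbein geodesic equations on an open interval I such that Σ_{α,β} K_{αβ}(x(λ))ẋ^α(λ)ẋ^β(λ) ≠ 0 for all λ ∈ I, the function λ ↦ Σ_{μ,ν} Υ^μ(x(λ), s(λ))·g_{μν}(x(λ))·ẋ^ν(λ)/n(λ), where s(λ)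 := (−Σ_{α,β} g_{αβ}(x(λ))ẋ^αẋ^β)/(Σ_{α,β} K_{αβ}(x(λ))ẋ^αẋ^β), is constant on I. -/
/-- Christoffel symbols Γ^μ_{κλ} of the metric `g` with inverse `ginv`. -/
noncomputable def christoffel {N : ℕ} (g ginv : (Fin N → ℝ) → Fin N → Fin N → ℝ)
    (μ κ lam : Fin N) (x : Fin N → ℝ) : ℝ :=
  (1 / 2) * ∑ σ, ginv x μ σ *
    (pd (fun y => g y σ lam) κ x + pd (fun y => g y κ σ) lam x - pd (fun y => g y κ lam) σ x)

/-- Covariant derivative ∇_κ K_{μν} of a 2-tensor field `K`. -/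
noncomputable def covD {N : ℕ} (g ginv K : (Fin N → ℝ) → Fin N → Fin N → ℝ)
    (κ μ ν : Fin N) (x : Fin N → ℝ) : ℝ :=
  pd (fun y => K y μ ν) κ x
    - ∑ σ, (christoffel g ginv σ κ μ x * K x σ ν + christoffel g ginv σ κ ν x * K x μ σ)

section swaps
variable {ι M : Type*} [Fintype ι] [AddCommMonoid M]

lemma sw3_12 (f : ι → ι → ι → M) :
    ∑ i, ∑ j, ∑ k, f i j k = ∑ i, ∑ j, ∑ k, f j i k := Finset.sum_comm

lemma sw3_23 (f : ι → ι → ι → M) :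
    ∑ i, ∑ j, ∑ k, f i j k = ∑ i, ∑ j, ∑ k, f i k j :=
  Finset.sum_congr rfl fun _ _ => Finset.sum_comm

lemma sw4_12 (f : ι → ι → ι → ι → M) :
    ∑ i, ∑ j, ∑ k, ∑ l, f i j k l = ∑ i, ∑ j, ∑ k, ∑ l, f j i k l := Finset.sum_comm

lemma sw4_23 (f : ι → ι → ι → ι → M) :
    ∑ i, ∑ j, ∑ k, ∑ l, f i j k l = ∑ i, ∑ j, ∑ k, ∑ l, f i k j l :=
  Finset.sum_congr rfl fun _ _ => Finset.sum_comm

lemma sw4_34 (f : ι → ι → ι → ι → M) :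
    ∑ i, ∑ j, ∑ k, ∑ l, f i j k l = ∑ i, ∑ j, ∑ k, ∑ l, f i j l k :=
  Finset.sum_congr rfl fun _ _ => Finset.sum_congr rfl fun _ _ => Finset.sum_comm

end swaps

lemma clm_apply_sum {N : ℕ} (L : (Fin N → ℝ) →L[ℝ] ℝ) (v : Fin N → ℝ) :
    L v = ∑ i, v i * L (Pi.single i 1) := by
  have hv : v = ∑ i, v i • (Pi.single i 1 : Fin N → ℝ) := by
    funext j
    simp [Pi.single_apply]
  conv_lhs => rw [hv]
  rw [map_sum]
  simp [smul_eq_mul]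

lemma hasDerivAt_comp_curve {N : ℕ} {f : (Fin N → ℝ) → ℝ} (hf : ContDiff ℝ (⊤ : ℕ∞) f)
    {c : ℝ → Fin N → ℝ} {c' : Fin N → ℝ} {t : ℝ} (hc : HasDerivAt c c' t) :
    HasDerivAt (fun t => f (c t)) (∑ σ, c' σ * pd f σ (c t)) t := by
  have h1 : HasDerivAt (fun t => f (c t)) (fderiv ℝ f (c t) c') t :=
    (hf.differentiable (by simp) (c t)).hasFDerivAt.comp_hasDerivAt t hc
  have : fderiv ℝ f (c t) c' = ∑ σ, c' σ * pd f σ (c t) := by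
    rw [clm_apply_sum]; rfl
  rwa [this] at h1

lemma pair_clm_apply {N : ℕ} (L : ((Fin N → ℝ) × ℝ) →L[ℝ] ℝ) (v : Fin N → ℝ) :
    L (v, (0:ℝ)) = ∑ i, v i * L (Pi.single i 1, (0:ℝ)) := by
  have hv : ((v, (0:ℝ)) : (Fin N → ℝ) × ℝ)
      = ∑ i, v i • (((Pi.single i 1 : Fin N → ℝ), (0:ℝ)) : (Fin N → ℝ) × ℝ) := by
    rw [Prod.ext_iff]
    refine ⟨?_, ?_⟩
    · rw [Prod.fst_sum]
      funext j
      simp [Pi.single_apply]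
    · rw [Prod.snd_sum]
      simp
  rw [hv, map_sum]
  refine Finset.sum_congr rfl fun i _ => ?_
  rw [map_smul, smul_eq_mul]

lemma hasDerivAt_comp_curve2 {N : ℕ} {F : ((Fin N → ℝ) × ℝ) → ℝ} (hF : ContDiff ℝ (⊤ : ℕ∞) F)
    {c : ℝ → Fin N → ℝ} {c' : Fin N → ℝ} {s : ℝ → ℝ} {t : ℝ}
    (hc : HasDerivAt c c' t) (hs : HasDerivAt s 0 t) :
    HasDerivAt (fun t => F (c t, s t)) (∑ σ, c' σ * pd (fun y => F (y, s t)) σ (c t)) t := by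
  set L := fderiv ℝ F (c t, s t) with hL
  have hFd : HasFDerivAt F L (c t, s t) := (hF.differentiable (by simp) _).hasFDerivAt
  have hpair : HasDerivAt (fun t => ((c t, s t) : (Fin N → ℝ) × ℝ)) (c', (0:ℝ)) t :=
    hc.prodMk hs
  have h1 : HasDerivAt (fun t => F (c t, s t)) (L (c', 0)) t :=
    hFd.comp_hasDerivAt t hpair
  have hpd : ∀ σ, pd (fun y => F (y, s t)) σ (c t) = L (Pi.single σ 1, (0:ℝ)) := by
    intro σ
    have hemb : HasFDerivAt (fun y : Fin N → ℝ => ((y, s t) : (Fin N → ℝ) × ℝ))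
        ((ContinuousLinearMap.id ℝ (Fin N → ℝ)).prod 0) (c t) :=
      (hasFDerivAt_id (c t)).prodMk (hasFDerivAt_const _ _)
    have hcomp : HasFDerivAt (fun y : Fin N → ℝ => F (y, s t))
        (L.comp ((ContinuousLinearMap.id ℝ (Fin N → ℝ)).prod 0)) (c t) :=
      hFd.comp (c t) hemb
    rw [pd, hcomp.fderiv]
    rfl
  rw [pair_clm_apply] at h1
  have : (∑ i, c' i * L (Pi.single i 1, (0:ℝ)))
      = ∑ σ, c' σ * pd (fun y => F (y, s t)) σ (c t) := by
    exact Finset.sum_congr rfl fun σ _ => by rw [hpd σ]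
  rwa [this] at h1
lemma covD_apply {N : ℕ} (g ginv K : (Fin N → ℝ) → Fin N → Fin N → ℝ)
    (κ μ ν : Fin N) (x : Fin N → ℝ) :
    covD g ginv K κ μ ν x = pd (fun y => K y μ ν) κ x
      - ∑ σ, (christoffel g ginv σ κ μ x * K x σ ν + christoffel g ginv σ κ ν x * K x μ σ) := rfl

lemma quad_alg {N : ℕ}
    (g ginv T : (Fin N → ℝ) → Fin N → Fin N → ℝ)
    (x u A : Fin N → ℝ) (r : ℝ)
    (hT_symm : ∀ μ ν, T x μ ν = T x ν μ)
    (hcyc : ∀ κ μ ν, covD g ginv T κ μ ν x + covD g ginv T μ ν κ x + covD g ginv T ν κ μ x = 0)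
    (hA : ∀ μ, A μ = u μ * r - ∑ κ, ∑ σ, christoffel g ginv μ κ σ x * u κ * u σ) :
    (∑ α, ∑ β, ((∑ σ, u σ * pd (fun y => T y α β) σ x) * u α * u β
        + T x α β * A α * u β + T x α β * u α * A β))
      = 2 * r * ∑ α, ∑ β, T x α β * u α * u β := by
  -- the key contracted quantities
  have hW : ∑ κ, ∑ μ, ∑ ν, covD g ginv T κ μ ν x * u κ * u μ * u ν = 0 := by
    have h0 : ∑ κ, ∑ μ, ∑ ν,
        (covD g ginv T κ μ ν x + covD g ginv T μ ν κ x + covD g ginv T ν κ μ x)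
          * u κ * u μ * u ν = 0 := by
      simp only [hcyc, zero_mul, Finset.sum_const_zero]
    simp only [add_mul, Finset.sum_add_distrib] at h0
    have e2 : ∑ κ, ∑ μ, ∑ ν, covD g ginv T μ ν κ x * u κ * u μ * u ν
        = ∑ κ, ∑ μ, ∑ ν, covD g ginv T κ μ ν x * u κ * u μ * u ν := by
      rw [sw3_12, sw3_23]
      exact Finset.sum_congr rfl fun _ _ => Finset.sum_congr rfl fun _ _ =>
        Finset.sum_congr rfl fun _ _ => by ring
    have e3 : ∑ κ, ∑ μ, ∑ ν, covD g ginv T ν κ μ x * u κ * u μ * u ν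
        = ∑ κ, ∑ μ, ∑ ν, covD g ginv T κ μ ν x * u κ * u μ * u ν := by
      rw [sw3_23, sw3_12]
      exact Finset.sum_congr rfl fun _ _ => Finset.sum_congr rfl fun _ _ =>
        Finset.sum_congr rfl fun _ _ => by ring
    rw [e2, e3] at h0
    linarith
  simp only [covD_apply, sub_mul, add_mul, Finset.sum_mul, Finset.sum_sub_distrib,
    Finset.sum_add_distrib] at hW
  -- reindex the two Christoffel contractions in hW to the canonical X
  have eX1 : ∑ κ, ∑ μ, ∑ ν, ∑ σ, christoffel g ginv σ κ μ x * T x σ ν * u κ * u μ * u ν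
      = ∑ α, ∑ β, ∑ κ, ∑ σ, christoffel g ginv α κ σ x * T x α β * u κ * u σ * u β := by
    rw [sw4_23, sw4_12, sw4_34, sw4_23, sw4_12]
  have eX2 : ∑ κ, ∑ μ, ∑ ν, ∑ σ, christoffel g ginv σ κ ν x * T x μ σ * u κ * u μ * u ν
      = ∑ α, ∑ β, ∑ κ, ∑ σ, christoffel g ginv α κ σ x * T x α β * u κ * u σ * u β := by
    rw [sw4_12, sw4_34, sw4_23, sw4_12]
    refine Finset.sum_congr rfl fun _ _ => Finset.sum_congr rfl fun _ _ =>
      Finset.sum_congr rfl fun _ _ => Finset.sum_congr rfl fun _ _ => ?_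
    rw [hT_symm]
    ring
  rw [eX1, eX2] at hW
  have h1 : ∑ α, ∑ β, (∑ σ, u σ * pd (fun y => T y α β) σ x) * u α * u β
      = 2 * ∑ α, ∑ β, ∑ κ, ∑ σ, christoffel g ginv α κ σ x * T x α β * u κ * u σ * u β := by
    have hs1 : ∑ α, ∑ β, (∑ σ, u σ * pd (fun y => T y α β) σ x) * u α * u β
        = ∑ κ, ∑ μ, ∑ ν, pd (fun y => T y μ ν) κ x * u κ * u μ * u ν := by
      simp only [Finset.sum_mul]
      rw [sw3_23, sw3_12]
      exact Finset.sum_congr rfl fun _ _ => Finset.sum_congr rfl fun _ _ =>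
        Finset.sum_congr rfl fun _ _ => by ring
    rw [hs1]
    linarith
  have h2 : ∑ α, ∑ β, T x α β * A α * u β
      = r * (∑ α, ∑ β, T x α β * u α * u β)
        - ∑ α, ∑ β, ∑ κ, ∑ σ, christoffel g ginv α κ σ x * T x α β * u κ * u σ * u β := by
    have step : ∀ α β, T x α β * A α * u β
        = T x α β * u α * u β * r
          - ∑ κ, ∑ σ, christoffel g ginv α κ σ x * T x α β * u κ * u σ * u β := by
      intro α β
      rw [hA, mul_sub, sub_mul]
      congr 1
      · ring
      · simp only [Finset.mul_sum, Finset.sum_mul]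
        exact Finset.sum_congr rfl fun _ _ => Finset.sum_congr rfl fun _ _ => by ring
    simp only [step, Finset.sum_sub_distrib]
    congr 1
    simp only [Finset.mul_sum]
    exact Finset.sum_congr rfl fun _ _ => Finset.sum_congr rfl fun _ _ => by ring
  have h3 : ∑ α, ∑ β, T x α β * u α * A β
      = r * (∑ α, ∑ β, T x α β * u α * u β)
        - ∑ α, ∑ β, ∑ κ, ∑ σ, christoffel g ginv α κ σ x * T x α β * u κ * u σ * u β := by
    have step : ∀ α β, T x α β * u α * A β
        = T x α β * u α * u β * r
          - ∑ κ, ∑ σ, christoffel g ginv β κ σ x * T x α β * u κ * u σ * u α := by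
      intro α β
      rw [hA, mul_sub]
      congr 1
      · ring
      · simp only [Finset.mul_sum]
        exact Finset.sum_congr rfl fun _ _ => Finset.sum_congr rfl fun _ _ => by ring
    simp only [step, Finset.sum_sub_distrib]
    have reix : ∑ α, ∑ β, ∑ κ, ∑ σ, christoffel g ginv β κ σ x * T x α β * u κ * u σ * u α
        = ∑ α, ∑ β, ∑ κ, ∑ σ, christoffel g ginv α κ σ x * T x α β * u κ * u σ * u β := by
      rw [sw4_12]
      refine Finset.sum_congr rfl fun _ _ => Finset.sum_congr rfl fun _ _ =>
        Finset.sum_congr rfl fun _ _ => Finset.sum_congr rfl fun _ _ => ?_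
      rw [hT_symm]
    rw [reix]
    congr 1
    simp only [Finset.mul_sum]
    exact Finset.sum_congr rfl fun _ _ => Finset.sum_congr rfl fun _ _ => by ring
  simp only [Finset.sum_add_distrib]
  rw [h1, h2, h3]
  ring
lemma lowered_christoffel {N : ℕ} (g ginv : (Fin N → ℝ) → Fin N → Fin N → ℝ)
    (h_inv : ∀ x μ ν, (∑ σ, g x μ σ * ginv x σ ν) = if μ = ν then (1 : ℝ) else 0)
    (x : Fin N → ℝ) (μ κ lam : Fin N) :
    ∑ ν, g x μ ν * christoffel g ginv ν κ lam x
      = (1/2) * (pd (fun y => g y μ lam) κ x + pd (fun y => g y κ μ) lam x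
          - pd (fun y => g y κ lam) μ x) := by
  calc ∑ ν, g x μ ν * christoffel g ginv ν κ lam x
      = ∑ ν, ∑ σ, (g x μ ν * ginv x ν σ) *
          ((1/2) * (pd (fun y => g y σ lam) κ x + pd (fun y => g y κ σ) lam x
            - pd (fun y => g y κ lam) σ x)) := by
        refine Finset.sum_congr rfl fun ν _ => ?_
        rw [christoffel, Finset.mul_sum, Finset.mul_sum]
        exact Finset.sum_congr rfl fun σ _ => by ring
    _ = ∑ σ, (∑ ν, g x μ ν * ginv x ν σ) *
          ((1/2) * (pd (fun y => g y σ lam) κ x + pd (fun y => g y κ σ) lam x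
            - pd (fun y => g y κ lam) σ x)) := by
        rw [Finset.sum_comm]
        exact Finset.sum_congr rfl fun σ _ => (Finset.sum_mul _ _ _).symm
    _ = ∑ σ, (if μ = σ then (1:ℝ) else 0) *
          ((1/2) * (pd (fun y => g y σ lam) κ x + pd (fun y => g y κ σ) lam x
            - pd (fun y => g y κ lam) σ x)) := by
        simp only [h_inv]
    _ = (1/2) * (pd (fun y => g y μ lam) κ x + pd (fun y => g y κ μ) lam x
          - pd (fun y => g y κ lam) μ x) := by
        simp

lemma covD_g_zero {N : ℕ} (g ginv : (Fin N → ℝ) → Fin N → Fin N → ℝ)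
    (hg_symm : ∀ x μ ν, g x μ ν = g x ν μ)
    (h_inv : ∀ x μ ν, (∑ σ, g x μ σ * ginv x σ ν) = if μ = ν then (1 : ℝ) else 0)
    (x : Fin N → ℝ) (κ μ ν : Fin N) :
    covD g ginv g κ μ ν x = 0 := by
  have pdsym : ∀ (κ μ ν : Fin N), pd (fun y => g y μ ν) κ x = pd (fun y => g y ν μ) κ x := by
    intro κ μ ν
    congr 1
    funext y
    rw [hg_symm]
  rw [covD_apply]
  have e : ∑ σ, (christoffel g ginv σ κ μ x * g x σ ν + christoffel g ginv σ κ ν x * g x μ σ)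
      = (∑ σ, g x ν σ * christoffel g ginv σ κ μ x)
        + ∑ σ, g x μ σ * christoffel g ginv σ κ ν x := by
    rw [← Finset.sum_add_distrib]
    refine Finset.sum_congr rfl fun σ _ => ?_
    rw [hg_symm x σ ν]
    ring
  rw [e, lowered_christoffel g ginv h_inv x ν κ μ, lowered_christoffel g ginv h_inv x μ κ ν,
    pdsym κ ν μ]
  ring
set_option maxHeartbeats 1000000 in
lemma main_alg {N : ℕ}
    (g ginv K : (Fin N → ℝ) → Fin N → Fin N → ℝ) (V : (Fin N → ℝ) → Fin N → ℝ)
    (hg_symm : ∀ x μ ν, g x μ ν = g x ν μ)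
    (h_inv : ∀ x μ ν, (∑ σ, g x μ σ * ginv x σ ν) = if μ = ν then (1 : ℝ) else 0)
    (x u A : Fin N → ℝ) (r Ω0 s0 : ℝ)
    (hlie : ∀ μ ν, lieD V g x μ ν = 2 * Ω0 * (g x μ ν + s0 * K x μ ν))
    (hnull : (∑ μ, ∑ ν, g x μ ν * u μ * u ν) + s0 * (∑ μ, ∑ ν, K x μ ν * u μ * u ν) = 0)
    (hA : ∀ μ, A μ = u μ * r - ∑ κ, ∑ σ, christoffel g ginv μ κ σ x * u κ * u σ) :
    ∑ μ, ∑ ν, ((∑ σ, u σ * pd (fun y => V y μ) σ x) * g x μ ν * u ν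
      + V x μ * (∑ σ, u σ * pd (fun y => g y μ ν) σ x) * u ν
      + V x μ * g x μ ν * A ν)
    = (∑ μ, ∑ ν, V x μ * g x μ ν * u ν) * r := by
  have pdsym : ∀ (κ μ ν : Fin N), pd (fun y => g y μ ν) κ x = pd (fun y => g y ν μ) κ x := by
    intro κ μ ν
    congr 1
    funext y
    rw [hg_symm]
  -- canonical contracted quantities
  -- Y1, Y2, Y3 and the flat version of T1
  -- Lie derivative contraction vanishes
  have hL : ∑ μ, ∑ ν, lieD V g x μ ν * u μ * u ν = 0 := by
    have e : ∑ μ, ∑ ν, lieD V g x μ ν * u μ * u ν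
        = (2*Ω0) * (∑ μ, ∑ ν, g x μ ν * u μ * u ν)
          + (2*Ω0*s0) * (∑ μ, ∑ ν, K x μ ν * u μ * u ν) := by
      calc ∑ μ, ∑ ν, lieD V g x μ ν * u μ * u ν
          = ∑ μ, ∑ ν, ((2*Ω0) * (g x μ ν * u μ * u ν)
              + (2*Ω0*s0) * (K x μ ν * u μ * u ν)) := by
            refine Finset.sum_congr rfl fun μ _ => Finset.sum_congr rfl fun ν _ => ?_
            rw [hlie]
            ring
        _ = _ := by
            simp only [Finset.sum_add_distrib, ← Finset.mul_sum]
    rw [e]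
    linear_combination (2*Ω0) * hnull
  -- expand the Lie derivative
  have hLexp : ∑ μ, ∑ ν, lieD V g x μ ν * u μ * u ν
      = (∑ μ, ∑ ν, ∑ σ, V x σ * pd (fun y => g y μ ν) σ x * u μ * u ν)
        + (∑ μ, ∑ ν, ∑ σ, g x σ ν * pd (fun y => V y σ) μ x * u μ * u ν)
        + (∑ μ, ∑ ν, ∑ σ, g x μ σ * pd (fun y => V y σ) ν x * u μ * u ν) := by
    simp only [lieD, add_mul, Finset.sum_mul, Finset.sum_add_distrib]
  have eL1 : ∑ μ, ∑ ν, ∑ σ, V x σ * pd (fun y => g y μ ν) σ x * u μ * u ν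
      = ∑ μ, ∑ κ, ∑ σ, pd (fun y => g y κ σ) μ x * V x μ * u κ * u σ := by
    rw [sw3_23, sw3_12]
    exact Finset.sum_congr rfl fun _ _ => Finset.sum_congr rfl fun _ _ =>
      Finset.sum_congr rfl fun _ _ => by ring
  have eL2 : ∑ μ, ∑ ν, ∑ σ, g x σ ν * pd (fun y => V y σ) μ x * u μ * u ν
      = ∑ μ, ∑ ν, ∑ σ, u σ * pd (fun y => V y μ) σ x * g x μ ν * u ν := by
    rw [sw3_12, sw3_23, sw3_12]
    exact Finset.sum_congr rfl fun _ _ => Finset.sum_congr rfl fun _ _ =>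
      Finset.sum_congr rfl fun _ _ => by ring
  have eL3 : ∑ μ, ∑ ν, ∑ σ, g x μ σ * pd (fun y => V y σ) ν x * u μ * u ν
      = ∑ μ, ∑ ν, ∑ σ, u σ * pd (fun y => V y μ) σ x * g x μ ν * u ν := by
    rw [sw3_23, sw3_12]
    refine Finset.sum_congr rfl fun _ _ => Finset.sum_congr rfl fun _ _ =>
      Finset.sum_congr rfl fun _ _ => ?_
    rw [hg_symm]
    ring
  -- hence: Y3 + 2 * T1flat = 0
  have hT1 : (∑ μ, ∑ κ, ∑ σ, pd (fun y => g y κ σ) μ x * V x μ * u κ * u σ)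
      + 2 * (∑ μ, ∑ ν, ∑ σ, u σ * pd (fun y => V y μ) σ x * g x μ ν * u ν) = 0 := by
    rw [hLexp, eL1, eL2, eL3] at hL
    linarith
  -- T1 flattening
  have eT1 : ∑ μ, ∑ ν, (∑ σ, u σ * pd (fun y => V y μ) σ x) * g x μ ν * u ν
      = ∑ μ, ∑ ν, ∑ σ, u σ * pd (fun y => V y μ) σ x * g x μ ν * u ν := by
    simp only [Finset.sum_mul]
  -- T2 equals Y1
  have eT2 : ∑ μ, ∑ ν, V x μ * (∑ σ, u σ * pd (fun y => g y μ ν) σ x) * u ν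
      = ∑ μ, ∑ κ, ∑ σ, pd (fun y => g y μ σ) κ x * V x μ * u κ * u σ := by
    simp only [Finset.mul_sum, Finset.sum_mul]
    rw [sw3_23]
    exact Finset.sum_congr rfl fun _ _ => Finset.sum_congr rfl fun _ _ =>
      Finset.sum_congr rfl fun _ _ => by ring
  -- Y2 equals Y1
  have eY2 : ∑ μ, ∑ κ, ∑ σ, pd (fun y => g y κ μ) σ x * V x μ * u κ * u σ
      = ∑ μ, ∑ κ, ∑ σ, pd (fun y => g y μ σ) κ x * V x μ * u κ * u σ := by
    rw [sw3_23]
    refine Finset.sum_congr rfl fun _ _ => Finset.sum_congr rfl fun _ _ =>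
      Finset.sum_congr rfl fun _ _ => ?_
    rw [pdsym]
    ring
  -- T3
  have eT3 : ∑ μ, ∑ ν, V x μ * g x μ ν * A ν
      = (∑ μ, ∑ ν, V x μ * g x μ ν * u ν) * r
        - ((1/2) * (∑ μ, ∑ κ, ∑ σ, pd (fun y => g y μ σ) κ x * V x μ * u κ * u σ)
          + (1/2) * (∑ μ, ∑ κ, ∑ σ, pd (fun y => g y κ μ) σ x * V x μ * u κ * u σ)
          - (1/2) * (∑ μ, ∑ κ, ∑ σ, pd (fun y => g y κ σ) μ x * V x μ * u κ * u σ)) := by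
    have step : ∀ μ ν, V x μ * g x μ ν * A ν
        = V x μ * g x μ ν * u ν * r
          - ∑ κ, ∑ σ, christoffel g ginv ν κ σ x * (V x μ * g x μ ν) * u κ * u σ := by
      intro μ ν
      rw [hA, mul_sub]
      congr 1
      · ring
      · simp only [Finset.mul_sum]
        exact Finset.sum_congr rfl fun _ _ => Finset.sum_congr rfl fun _ _ => by ring
    simp only [step, Finset.sum_sub_distrib]
    have q1 : ∑ μ, ∑ ν, V x μ * g x μ ν * u ν * r
        = (∑ μ, ∑ ν, V x μ * g x μ ν * u ν) * r := by
      symm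
      simp only [Finset.sum_mul]
    have q2 : ∑ μ, ∑ ν, ∑ κ, ∑ σ, christoffel g ginv ν κ σ x * (V x μ * g x μ ν) * u κ * u σ
        = (1/2) * (∑ μ, ∑ κ, ∑ σ, pd (fun y => g y μ σ) κ x * V x μ * u κ * u σ)
          + (1/2) * (∑ μ, ∑ κ, ∑ σ, pd (fun y => g y κ μ) σ x * V x μ * u κ * u σ)
          - (1/2) * (∑ μ, ∑ κ, ∑ σ, pd (fun y => g y κ σ) μ x * V x μ * u κ * u σ) := by
      calc ∑ μ, ∑ ν, ∑ κ, ∑ σ, christoffel g ginv ν κ σ x * (V x μ * g x μ ν) * u κ * u σ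
          = ∑ μ, ∑ κ, ∑ σ, ∑ ν, christoffel g ginv ν κ σ x * (V x μ * g x μ ν) * u κ * u σ := by
            rw [sw4_23, sw4_34]
        _ = ∑ μ, ∑ κ, ∑ σ, (1/2) * (pd (fun y => g y μ σ) κ x + pd (fun y => g y κ μ) σ x
              - pd (fun y => g y κ σ) μ x) * (V x μ * u κ * u σ) := by
            refine Finset.sum_congr rfl fun μ _ => Finset.sum_congr rfl fun κ _ =>
              Finset.sum_congr rfl fun σ _ => ?_
            calc ∑ ν, christoffel g ginv ν κ σ x * (V x μ * g x μ ν) * u κ * u σ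
                = ∑ ν, (g x μ ν * christoffel g ginv ν κ σ x) * (V x μ * u κ * u σ) :=
                  Finset.sum_congr rfl fun ν _ => by ring
              _ = (∑ ν, g x μ ν * christoffel g ginv ν κ σ x) * (V x μ * u κ * u σ) :=
                  (Finset.sum_mul _ _ _).symm
              _ = _ := by rw [lowered_christoffel g ginv h_inv x μ κ σ]
        _ = ∑ μ, ∑ κ, ∑ σ, ((1/2) * (pd (fun y => g y μ σ) κ x * V x μ * u κ * u σ)
              + (1/2) * (pd (fun y => g y κ μ) σ x * V x μ * u κ * u σ)
              - (1/2) * (pd (fun y => g y κ σ) μ x * V x μ * u κ * u σ)) := by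
            refine Finset.sum_congr rfl fun μ _ => Finset.sum_congr rfl fun κ _ =>
              Finset.sum_congr rfl fun σ _ => by ring
        _ = _ := by
            simp only [Finset.sum_add_distrib, Finset.sum_sub_distrib, ← Finset.mul_sum]
    rw [q1, q2]
  -- assemble
  simp only [Finset.sum_add_distrib]
  rw [eT1, eT2, eT3, eY2]
  linarith
lemma hasDerivAt_quad {N : ℕ}
    (T : (Fin N → ℝ) → Fin N → Fin N → ℝ) (hT : ∀ μ ν, ContDiff ℝ (⊤ : ℕ∞) (fun x => T x μ ν))
    {c : ℝ → Fin N → ℝ} {u A : Fin N → ℝ} {t : ℝ}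
    (hc : HasDerivAt c u t)
    (hu : ∀ μ, HasDerivAt (fun s => deriv (fun r => c r μ) s) (A μ) t)
    (hut : ∀ μ, deriv (fun r => c r μ) t = u μ) :
    HasDerivAt
      (fun t => ∑ α, ∑ β, T (c t) α β * deriv (fun s => c s α) t * deriv (fun s => c s β) t)
      (∑ α, ∑ β, ((∑ σ, u σ * pd (fun y => T y α β) σ (c t)) * u α * u β
        + T (c t) α β * A α * u β + T (c t) α β * u α * A β)) t := by
  refine HasDerivAt.fun_sum fun α _ => HasDerivAt.fun_sum fun β _ => ?_
  have h := ((hasDerivAt_comp_curve (hT α β) hc).fun_mul (hu α)).fun_mul (hu β)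
  convert h using 1
  · rfl
  rw [hut α, hut β]
  ring

set_option maxHeartbeats 1000000 in
theorem stmt2 {N : ℕ}
    (g ginv K : (Fin N → ℝ) → Fin N → Fin N → ℝ)
    (hg_smooth : ∀ μ ν, ContDiff ℝ (⊤ : ℕ∞) (fun x => g x μ ν))
    (hg_symm : ∀ x μ ν, g x μ ν = g x ν μ)
    (hginv_smooth : ∀ μ ν, ContDiff ℝ (⊤ : ℕ∞) (fun x => ginv x μ ν))
    (h_inv : ∀ x μ ν, (∑ σ, g x μ σ * ginv x σ ν) = if μ = ν then (1 : ℝ) else 0)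
    (hK_smooth : ∀ μ ν, ContDiff ℝ (⊤ : ℕ∞) (fun x => K x μ ν))
    (hK_symm : ∀ x μ ν, K x μ ν = K x ν μ)
    (hKilling : ∀ x κ μ ν,
      covD g ginv K κ μ ν x + covD g ginv K μ ν κ x + covD g ginv K ν κ μ x = 0)
    (Υ : (Fin N → ℝ) → ℝ → Fin N → ℝ) (Ω : (Fin N → ℝ) → ℝ → ℝ)
    (hΥ_smooth : ∀ μ, ContDiff ℝ (⊤ : ℕ∞) (fun q : (Fin N → ℝ) × ℝ => Υ q.1 q.2 μ))
    (hΩ_smooth : ContDiff ℝ (⊤ : ℕ∞) (fun q : (Fin N → ℝ) × ℝ => Ω q.1 q.2))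
    (hdisf : ∀ s : ℝ, ∀ x μ ν,
      lieD (fun y => Υ y s) g x μ ν = 2 * Ω x s * (g x μ ν + s * K x μ ν))
    (a b : ℝ) (c : ℝ → Fin N → ℝ) (n : ℝ → ℝ)
    (hc : ∀ μ, ContDiffOn ℝ (⊤ : ℕ∞) (fun t => c t μ) (Set.Ioo a b))
    (hn : ContDiffOn ℝ (⊤ : ℕ∞) n (Set.Ioo a b))
    (hnpos : ∀ t ∈ Set.Ioo a b, 0 < n t)
    (hgeo : ∀ t ∈ Set.Ioo a b, ∀ μ,
      deriv (fun s => deriv (fun r => c r μ) s) t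
        + (∑ κ, ∑ σ, christoffel g ginv μ κ σ (c t)
            * deriv (fun s => c s κ) t * deriv (fun s => c s σ) t)
      = deriv (fun s => c s μ) t * deriv n t / n t)
    (hKnz : ∀ t ∈ Set.Ioo a b,
      (∑ α, ∑ β, K (c t) α β * deriv (fun s => c s α) t * deriv (fun s => c s β) t) ≠ 0)
    (sfun : ℝ → ℝ)
    (hsfun : sfun = fun t =>
      (-∑ α, ∑ β, g (c t) α β * deriv (fun s => c s α) t * deriv (fun s => c s β) t)
        / (∑ α, ∑ β, K (c t) α β * deriv (fun s => c s α) t * deriv (fun s => c s β) t)) :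
    ∀ t₁ ∈ Set.Ioo a b, ∀ t₂ ∈ Set.Ioo a b,
      (∑ μ, ∑ ν, Υ (c t₁) (sfun t₁) μ * g (c t₁) μ ν * deriv (fun s => c s ν) t₁) / n t₁
      = (∑ μ, ∑ ν, Υ (c t₂) (sfun t₂) μ * g (c t₂) μ ν * deriv (fun s => c s ν) t₂) / n t₂ := by
  intro t₁ ht₁ t₂ ht₂
  have hIopen : IsOpen (Set.Ioo a b) := isOpen_Ioo
  -- basic differentiability facts
  have hcdiff : ∀ μ, ∀ t ∈ Set.Ioo a b,
      HasDerivAt (fun s => c s μ) (deriv (fun r => c r μ) t) t := fun μ t ht =>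
    (((hc μ).differentiableOn (by simp)).differentiableAt (hIopen.mem_nhds ht)).hasDerivAt
  have hcu : ∀ t ∈ Set.Ioo a b,
      HasDerivAt c (fun μ => deriv (fun r => c r μ) t) t := fun t ht =>
    hasDerivAt_pi.2 fun μ => hcdiff μ t ht
  have hc' : ∀ μ, ContDiffOn ℝ ((⊤ : ℕ∞) : WithTop ℕ∞) (fun s => deriv (fun r => c r μ) s) (Set.Ioo a b) :=
    fun μ => ((contDiffOn_infty_iff_deriv_of_isOpen hIopen).1 ((hc μ).of_le (by simp))).2
  have hu : ∀ t ∈ Set.Ioo a b, ∀ μ, HasDerivAt (fun s => deriv (fun r => c r μ) s)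
      (deriv (fun s => deriv (fun r => c r μ) s) t) t := fun t ht μ =>
    (((hc' μ).differentiableOn (by simp)).differentiableAt (hIopen.mem_nhds ht)).hasDerivAt
  have hnd : ∀ t ∈ Set.Ioo a b, HasDerivAt n (deriv n t) t := fun t ht =>
    ((hn.differentiableOn (by simp)).differentiableAt (hIopen.mem_nhds ht)).hasDerivAt
  -- geodesic equation in solved form
  have hA : ∀ t ∈ Set.Ioo a b, ∀ μ, deriv (fun s => deriv (fun r => c r μ) s) t
      = deriv (fun s => c s μ) t * (deriv n t / n t)
        - ∑ κ, ∑ σ, christoffel g ginv μ κ σ (c t)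
            * deriv (fun s => c s κ) t * deriv (fun s => c s σ) t := by
    intro t ht μ
    have h1 := hgeo t ht μ
    have h2 : deriv (fun s => c s μ) t * deriv n t / n t
        = deriv (fun s => c s μ) t * (deriv n t / n t) := by ring
    rw [h2] at h1
    linarith
  -- derivative of the contraction of a symmetric Killing-type tensor
  have hTd : ∀ (T : (Fin N → ℝ) → Fin N → Fin N → ℝ),
      (∀ μ ν, ContDiff ℝ (⊤ : ℕ∞) (fun x => T x μ ν)) →
      (∀ x μ ν, T x μ ν = T x ν μ) →
      (∀ x κ μ ν, covD g ginv T κ μ ν x + covD g ginv T μ ν κ x + covD g ginv T ν κ μ x = 0) →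
      ∀ t ∈ Set.Ioo a b, HasDerivAt
        (fun t => ∑ α, ∑ β, T (c t) α β * deriv (fun s => c s α) t * deriv (fun s => c s β) t)
        (2 * (deriv n t / n t) *
          ∑ α, ∑ β, T (c t) α β * deriv (fun s => c s α) t * deriv (fun s => c s β) t) t := by
    intro T hTs hTsym hTcyc t ht
    have h : HasDerivAt
        (fun t => ∑ α, ∑ β, T (c t) α β * deriv (fun s => c s α) t * deriv (fun s => c s β) t)
        (∑ α, ∑ β, ((∑ σ, deriv (fun r => c r σ) t * pd (fun y => T y α β) σ (c t))
            * deriv (fun r => c r α) t * deriv (fun r => c r β) t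
          + T (c t) α β * deriv (fun s => deriv (fun r => c r α) s) t * deriv (fun r => c r β) t
          + T (c t) α β * deriv (fun r => c r α) t
              * deriv (fun s => deriv (fun r => c r β) s) t)) t :=
      hasDerivAt_quad T hTs (hcu t ht) (hu t ht) (fun μ => rfl)
    have e : (∑ α, ∑ β, ((∑ σ, deriv (fun r => c r σ) t * pd (fun y => T y α β) σ (c t))
            * deriv (fun r => c r α) t * deriv (fun r => c r β) t
          + T (c t) α β * deriv (fun s => deriv (fun r => c r α) s) t * deriv (fun r => c r β) t
          + T (c t) α β * deriv (fun r => c r α) t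
              * deriv (fun s => deriv (fun r => c r β) s) t))
        = 2 * (deriv n t / n t) *
            ∑ α, ∑ β, T (c t) α β * deriv (fun s => c s α) t * deriv (fun s => c s β) t :=
      quad_alg g ginv T (c t) (fun μ => deriv (fun r => c r μ) t)
        (fun μ => deriv (fun s => deriv (fun r => c r μ) s) t) (deriv n t / n t)
        (fun μ ν => hTsym (c t) μ ν) (fun κ μ ν => hTcyc (c t) κ μ ν) (hA t ht)
    rw [e] at h
    exact h
  -- cyclic identity for the metric itself
  have hcycg : ∀ x κ μ ν,
      covD g ginv g κ μ ν x + covD g ginv g μ ν κ x + covD g ginv g ν κ μ x = 0 := by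
    intro x κ μ ν
    simp only [covD_g_zero g ginv hg_symm h_inv]
    ring
  have hKd := hTd K hK_smooth hK_symm hKilling
  have hgd := hTd g hg_smooth hg_symm hcycg
  -- s is constant along the curve
  have hsd : ∀ t ∈ Set.Ioo a b, HasDerivAt sfun 0 t := by
    intro t ht
    rw [hsfun]
    have h := ((hgd t ht).fun_neg).fun_div (hKd t ht) (hKnz t ht)
    convert h using 1
    · rfl
    · rfl
    rw [eq_comm, div_eq_zero_iff]
    left
    ring
  -- value of s
  have hs_eq : ∀ t, sfun t
      = (-∑ α, ∑ β, g (c t) α β * deriv (fun s => c s α) t * deriv (fun s => c s β) t)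
        / (∑ α, ∑ β, K (c t) α β * deriv (fun s => c s α) t * deriv (fun s => c s β) t) := by
    intro t
    rw [hsfun]
  -- the conserved quantity and its derivative
  set F : ℝ → ℝ := fun t =>
    (∑ μ, ∑ ν, Υ (c t) (sfun t) μ * g (c t) μ ν * deriv (fun s => c s ν) t) / n t with hF_def
  have hFd : ∀ t ∈ Set.Ioo a b, HasDerivAt F 0 t := by
    intro t ht
    have hP : HasDerivAt
        (fun t => ∑ μ, ∑ ν, Υ (c t) (sfun t) μ * g (c t) μ ν * deriv (fun s => c s ν) t)
        (∑ μ, ∑ ν,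
          (((∑ σ, deriv (fun r => c r σ) t * pd (fun y => Υ y (sfun t) μ) σ (c t))
              * g (c t) μ ν
            + Υ (c t) (sfun t) μ
              * (∑ σ, deriv (fun r => c r σ) t * pd (fun y => g y μ ν) σ (c t)))
            * deriv (fun r => c r ν) t
          + Υ (c t) (sfun t) μ * g (c t) μ ν
              * deriv (fun s => deriv (fun r => c r ν) s) t)) t := by
      refine HasDerivAt.fun_sum fun μ _ => HasDerivAt.fun_sum fun ν _ => ?_
      exact ((hasDerivAt_comp_curve2 (hΥ_smooth μ) (hcu t ht) (hsd t ht)).fun_mul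
        (hasDerivAt_comp_curve (hg_smooth μ ν) (hcu t ht))).fun_mul (hu t ht ν)
    have hnull : (∑ μ, ∑ ν, g (c t) μ ν
            * deriv (fun r => c r μ) t * deriv (fun r => c r ν) t)
        + (sfun t) * (∑ μ, ∑ ν, K (c t) μ ν
            * deriv (fun r => c r μ) t * deriv (fun r => c r ν) t) = 0 := by
      rw [hs_eq t]
      have hz := hKnz t ht
      field_simp
      ring
    have e0 : (∑ μ, ∑ ν,
          (((∑ σ, deriv (fun r => c r σ) t * pd (fun y => Υ y (sfun t) μ) σ (c t))
              * g (c t) μ ν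
            + Υ (c t) (sfun t) μ
              * (∑ σ, deriv (fun r => c r σ) t * pd (fun y => g y μ ν) σ (c t)))
            * deriv (fun r => c r ν) t
          + Υ (c t) (sfun t) μ * g (c t) μ ν
              * deriv (fun s => deriv (fun r => c r ν) s) t))
        = ∑ μ, ∑ ν, ((∑ σ, deriv (fun r => c r σ) t
              * pd (fun y => (fun y => Υ y (sfun t)) y μ) σ (c t))
            * g (c t) μ ν * deriv (fun r => c r ν) t
          + (fun y => Υ y (sfun t)) (c t) μ
              * (∑ σ, deriv (fun r => c r σ) t * pd (fun y => g y μ ν) σ (c t))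
              * deriv (fun r => c r ν) t
          + (fun y => Υ y (sfun t)) (c t) μ * g (c t) μ ν
              * deriv (fun s => deriv (fun r => c r ν) s) t) := by
      refine Finset.sum_congr rfl fun μ _ => Finset.sum_congr rfl fun ν _ => ?_
      ring
    have e1 := main_alg g ginv K (fun y => Υ y (sfun t)) hg_symm h_inv (c t)
      (fun μ => deriv (fun r => c r μ) t)
      (fun μ => deriv (fun s => deriv (fun r => c r μ) s) t)
      (deriv n t / n t) (Ω (c t) (sfun t)) (sfun t)
      (fun μ ν => hdisf (sfun t) (c t) μ ν) hnull (hA t ht)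
    rw [e0, e1] at hP
    have hnz : n t ≠ 0 := ne_of_gt (hnpos t ht)
    have h := hP.fun_div (hnd t ht) hnz
    have : ((∑ μ, ∑ ν, (fun y => Υ y (sfun t)) (c t) μ * g (c t) μ ν
            * deriv (fun r => c r ν) t) * (deriv n t / n t) * n t
          - (∑ μ, ∑ ν, Υ (c t) (sfun t) μ * g (c t) μ ν * deriv (fun s => c s ν) t)
            * deriv n t) / n t ^ 2 = 0 := by
      rw [div_eq_zero_iff]
      left
      field_simp
      ring
    rw [this] at h
    exact h
  -- conclude by constancy on the interval
  rcases le_total t₁ t₂ with hle | hle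
  · have hsub : Set.Icc t₁ t₂ ⊆ Set.Ioo a b := Set.Icc_subset_Ioo ht₁.1 ht₂.2
    have hcont : ContinuousOn F (Set.Icc t₁ t₂) := fun x hx =>
      ((hFd x (hsub hx)).continuousAt).continuousWithinAt
    have hder : ∀ x ∈ Set.Ico t₁ t₂, HasDerivWithinAt F 0 (Set.Ici x) x := fun x hx =>
      (hFd x (hsub (Set.Ico_subset_Icc_self hx))).hasDerivWithinAt
    exact (constant_of_has_deriv_right_zero hcont hder t₂ (Set.right_mem_Icc.2 hle)).symm
  · have hsub : Set.Icc t₂ t₁ ⊆ Set.Ioo a b := Set.Icc_subset_Ioo ht₂.1 ht₁.2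
    have hcont : ContinuousOn F (Set.Icc t₂ t₁) := fun x hx =>
      ((hFd x (hsub hx)).continuousAt).continuousWithinAt
    have hder : ∀ x ∈ Set.Ico t₂ t₁, HasDerivWithinAt F 0 (Set.Ici x) x := fun x hx =>
      (hFd x (hsub (Set.Ico_subset_Icc_self hx))).hasDerivWithinAt
    exact constant_of_has_deriv_right_zero hcont hder t₁ (Set.right_mem_Icc.2 hle)
end

section
/- Let g be a metric on ℝ^N with Christoffel symbols Γ, let Y be a smooth vector field and ω a smooth function with (L_Y g)_{μν} = 2ω g_{μν} everywhere (Y is a conformal Killing vector of g with conformal factor ω), and let m ∈ ℝ. Let (x,n) : I → ℝ^N × ℝ_{>0} be smooth on an open interval I and satisfy both the einbein geodesic equations ẍ^μ + Σ Γ^μ_{κλ}(x)ẋ^κẋ^λ = ẋ^μ ṅ/n and the constraint Σ_{μ,ν} g_{μν}(x)ẋ^μẋ^ν + m²n² = 0 on I. Then for any λ₀ ∈ I the function λ ↦ Σ_{μ,ν} Y^μ(x(λ)) g_{μν}(x(λ)) ẋ^ν(λ)/n(λ) + m²·∫_{λ₀}^{λ} n(s)·ω(x(s)) ds is constant on I.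 -/
lemma chainRule {N : ℕ} {f : (Fin N → ℝ) → ℝ} (hf : ContDiff ℝ (⊤ : ℕ∞) f)
    {c : ℝ → Fin N → ℝ} {t : ℝ} (hc : ∀ μ, DifferentiableAt ℝ (fun s => c s μ) t) :
    HasDerivAt (fun s => f (c s)) (∑ σ, pd f σ (c t) * deriv (fun s => c s σ) t) t := by
  have hcd : HasDerivAt c (fun σ => deriv (fun s => c s σ) t) t :=
    hasDerivAt_pi.2 fun σ => (hc σ).hasDerivAt
  have hfd : HasFDerivAt f (fderiv ℝ f (c t)) (c t) :=
    (hf.differentiable (by simp) (c t)).hasFDerivAt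
  have h := hfd.comp_hasDerivAt t hcd
  convert h using 1
  · rfl
  · rfl
  · rfl
  have hv : (fun σ => deriv (fun s => c s σ) t)
      = ∑ σ : Fin N, (deriv (fun s => c s σ) t) • (Pi.single σ (1:ℝ) : Fin N → ℝ) := by
    rw [← Finset.univ_sum_single (fun σ => deriv (fun s => c s σ) t)]
    congr 1; ext σ x
    simp [Pi.single_apply]
  rw [hv, map_sum]
  simp [pd, mul_comm]

lemma contractGamma {N : ℕ} (g ginv : (Fin N → ℝ) → Fin N → Fin N → ℝ) (x : Fin N → ℝ)
    (h_inv : ∀ μ ν, (∑ σ, g x μ σ * ginv x σ ν) = if μ = ν then (1 : ℝ) else 0)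
    (μ κ lam : Fin N) :
    ∑ ν, g x μ ν * christoffel g ginv ν κ lam x
      = (1/2) * (pd (fun y => g y μ lam) κ x + pd (fun y => g y κ μ) lam x
          - pd (fun y => g y κ lam) μ x) := by
  simp only [christoffel, Finset.mul_sum]
  rw [Finset.sum_comm]
  have h1 : ∀ ρ : Fin N, (∑ ν, g x μ ν * (1/2 * (ginv x ν ρ *
      (pd (fun y => g y ρ lam) κ x + pd (fun y => g y κ ρ) lam x - pd (fun y => g y κ lam) ρ x))))
    = (if μ = ρ then (1:ℝ) else 0) * (1/2 * (pd (fun y => g y ρ lam) κ x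
        + pd (fun y => g y κ ρ) lam x - pd (fun y => g y κ lam) ρ x)) := by
    intro ρ
    rw [← h_inv μ ρ, Finset.sum_mul]
    exact Finset.sum_congr rfl fun ν _ => by ring
  rw [Finset.sum_congr rfl fun ρ _ => h1 ρ]
  simp [Finset.sum_ite_eq, ite_mul]

section
variable {α : Type*} [Fintype α]

lemma tswap23 (f : α → α → α → ℝ) :
    ∑ i, ∑ j, ∑ k, f i j k = ∑ i, ∑ j, ∑ k, f i k j :=
  Finset.sum_congr rfl fun _ _ => Finset.sum_comm

lemma tcyc (f : α → α → α → ℝ) :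
    ∑ i, ∑ j, ∑ k, f i j k = ∑ i, ∑ j, ∑ k, f k i j := by
  calc ∑ i, ∑ j, ∑ k, f i j k = ∑ j, ∑ i, ∑ k, f i j k := Finset.sum_comm
    _ = ∑ j, ∑ k, ∑ i, f i j k := Finset.sum_congr rfl fun _ _ => Finset.sum_comm

lemma tswap13 (f : α → α → α → ℝ) :
    ∑ i, ∑ j, ∑ k, f i j k = ∑ i, ∑ j, ∑ k, f k j i := by
  calc ∑ i, ∑ j, ∑ k, f i j k = ∑ j, ∑ i, ∑ k, f i j k := Finset.sum_comm
    _ = ∑ j, ∑ k, ∑ i, f i j k := Finset.sum_congr rfl fun _ _ => Finset.sum_comm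
    _ = ∑ k, ∑ j, ∑ i, f i j k := Finset.sum_comm

end

lemma keyAlg {N : ℕ} (G : Fin N → Fin N → ℝ) (Gp : Fin N → Fin N → Fin N → ℝ)
    (Yv : Fin N → ℝ) (Yp : Fin N → Fin N → ℝ) (Gam : Fin N → Fin N → Fin N → ℝ)
    (w : ℝ) (v : Fin N → ℝ)
    (hGsym : ∀ μ ν, G μ ν = G ν μ)
    (hGpsym : ∀ σ μ ν, Gp σ μ ν = Gp σ ν μ)
    (hcontract : ∀ μ κ lam, (∑ ν, G μ ν * Gam ν κ lam)
        = (1/2) * (Gp κ μ lam + Gp lam κ μ - Gp μ κ lam))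
    (hlie : ∀ μ ν, (∑ σ, (Yv σ * Gp σ μ ν + G σ ν * Yp μ σ + G μ σ * Yp ν σ)) = 2*w*G μ ν) :
    ∑ μ, ∑ ν, ((∑ σ, Yp σ μ * v σ) * G μ ν * v ν
      + Yv μ * (∑ σ, Gp σ μ ν * v σ) * v ν
      - Yv μ * G μ ν * (∑ κ, ∑ lam, Gam ν κ lam * v κ * v lam))
    = w * ∑ μ, ∑ ν, G μ ν * v μ * v ν := by
  set A := ∑ i, ∑ j, ∑ k, Yv k * Gp k i j * (v i * v j) with hA
  set B := ∑ i, ∑ j, ∑ k, G k j * Yp i k * (v i * v j) with hB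
  set C := ∑ i, ∑ j, ∑ k, G i k * Yp j k * (v i * v j) with hC
  set T1 := ∑ μ, ∑ ν, (∑ σ, Yp σ μ * v σ) * G μ ν * v ν with hT1
  set T2 := ∑ μ, ∑ ν, Yv μ * (∑ σ, Gp σ μ ν * v σ) * v ν with hT2
  set T3 := ∑ μ, ∑ ν, Yv μ * G μ ν * (∑ κ, ∑ lam, Gam ν κ lam * v κ * v lam) with hT3
  -- T1 expanded
  have hT1e : T1 = ∑ i, ∑ j, ∑ k, Yp k i * G i j * (v k * v j) := by
    rw [hT1]
    refine Finset.sum_congr rfl fun i _ => Finset.sum_congr rfl fun j _ => ?_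
    rw [Finset.sum_mul, Finset.sum_mul]
    exact Finset.sum_congr rfl fun k _ => by ring
  have hT1B : T1 = B := by
    rw [hT1e, tswap13 (fun i j k => Yp k i * G i j * (v k * v j)), hB]
    exact Finset.sum_congr rfl fun i _ => Finset.sum_congr rfl fun j _ =>
      Finset.sum_congr rfl fun k _ => by ring
  have hT1C : T1 = C := by
    rw [hT1e, tcyc (fun i j k => Yp k i * G i j * (v k * v j)), hC]
    refine Finset.sum_congr rfl fun i _ => Finset.sum_congr rfl fun j _ =>
      Finset.sum_congr rfl fun k _ => ?_
    rw [hGsym i k]; ring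
  -- T2 expanded
  have hT2e : T2 = ∑ i, ∑ j, ∑ k, Yv i * Gp k i j * (v k * v j) := by
    rw [hT2]
    refine Finset.sum_congr rfl fun i _ => Finset.sum_congr rfl fun j _ => ?_
    rw [Finset.mul_sum, Finset.sum_mul]
    exact Finset.sum_congr rfl fun k _ => by ring
  -- T3 computation
  have hT3e : T3 = (1/2) * (∑ i, ∑ j, ∑ k,
      Yv i * ((Gp j i k + Gp k j i - Gp i j k) * (v j * v k))) := by
    rw [hT3]
    have hstep : ∀ μ, ∑ ν, G μ ν * (∑ κ, ∑ lam, Gam ν κ lam * v κ * v lam)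
        = ∑ κ, ∑ lam, (1/2) * ((Gp κ μ lam + Gp lam κ μ - Gp μ κ lam) * (v κ * v lam)) := by
      intro μ
      have e1 : ∑ ν, G μ ν * (∑ κ, ∑ lam, Gam ν κ lam * v κ * v lam)
          = ∑ ν, ∑ κ, ∑ lam, G μ ν * Gam ν κ lam * (v κ * v lam) := by
        refine Finset.sum_congr rfl fun ν _ => ?_
        rw [Finset.mul_sum]
        refine Finset.sum_congr rfl fun κ _ => ?_
        rw [Finset.mul_sum]
        exact Finset.sum_congr rfl fun lam _ => by ring
      rw [e1, tcyc (fun ν κ lam => G μ ν * Gam ν κ lam * (v κ * v lam))]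
      refine Finset.sum_congr rfl fun κ _ => Finset.sum_congr rfl fun lam _ => ?_
      rw [← Finset.sum_mul, hcontract]
      ring
    have e2 : ∀ μ, ∑ ν, Yv μ * G μ ν * (∑ κ, ∑ lam, Gam ν κ lam * v κ * v lam)
        = Yv μ * ∑ ν, G μ ν * (∑ κ, ∑ lam, Gam ν κ lam * v κ * v lam) := by
      intro μ
      rw [Finset.mul_sum]
      exact Finset.sum_congr rfl fun ν _ => by ring
    rw [Finset.sum_congr rfl fun μ _ => (e2 μ).trans (by rw [hstep μ])]
    rw [Finset.mul_sum]
    refine Finset.sum_congr rfl fun i _ => ?_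
    rw [Finset.mul_sum, Finset.mul_sum]
    refine Finset.sum_congr rfl fun j _ => ?_
    rw [Finset.mul_sum, Finset.mul_sum]
    exact Finset.sum_congr rfl fun k _ => by ring
  have hT3' : T3 = T2 - (1/2) * A := by
    rw [hT3e]
    have hsplit : (∑ i, ∑ j, ∑ k, Yv i * ((Gp j i k + Gp k j i - Gp i j k) * (v j * v k)))
        = (∑ i, ∑ j, ∑ k, Yv i * Gp j i k * (v j * v k))
          + (∑ i, ∑ j, ∑ k, Yv i * Gp k j i * (v j * v k))
          - (∑ i, ∑ j, ∑ k, Yv i * Gp i j k * (v j * v k)) := by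
      have hr : ∀ i j k : Fin N, Yv i * ((Gp j i k + Gp k j i - Gp i j k) * (v j * v k))
          = Yv i * Gp j i k * (v j * v k) + Yv i * Gp k j i * (v j * v k)
            - Yv i * Gp i j k * (v j * v k) := fun i j k => by ring
      simp only [hr, Finset.sum_add_distrib, Finset.sum_sub_distrib]
    rw [hsplit]
    have hA3 : (∑ i, ∑ j, ∑ k, Yv i * Gp j i k * (v j * v k)) = T2 := by
      rw [hT2e, tswap23 (fun i j k => Yv i * Gp j i k * (v j * v k))]
    have hB3 : (∑ i, ∑ j, ∑ k, Yv i * Gp k j i * (v j * v k)) = T2 := by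
      rw [hT2e]
      refine Finset.sum_congr rfl fun i _ => Finset.sum_congr rfl fun j _ =>
        Finset.sum_congr rfl fun k _ => ?_
      rw [hGpsym k j i]; ring
    have hC3 : (∑ i, ∑ j, ∑ k, Yv i * Gp i j k * (v j * v k)) = A := by
      rw [tcyc (fun i j k => Yv i * Gp i j k * (v j * v k)), hA]
    rw [hA3, hB3, hC3]; ring
  -- RHS via Lie derivative
  have hrhs : 2 * (w * ∑ μ, ∑ ν, G μ ν * v μ * v ν) = A + 2 * T1 := by
    have e3 : ∑ μ, ∑ ν, (2 * w * G μ ν) * (v μ * v ν) = A + B + C := by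
      have e4 : ∀ (μ ν : Fin N), (2 * w * G μ ν) * (v μ * v ν)
          = ∑ σ, (Yv σ * Gp σ μ ν * (v μ * v ν) + G σ ν * Yp μ σ * (v μ * v ν)
              + G μ σ * Yp ν σ * (v μ * v ν)) := by
        intro μ ν
        rw [← hlie μ ν, Finset.sum_mul]
        exact Finset.sum_congr rfl fun σ _ => by ring
      rw [Finset.sum_congr rfl fun μ _ => Finset.sum_congr rfl fun ν _ => e4 μ ν]
      rw [hA, hB, hC]
      have : ∀ μ, ∑ ν, ∑ σ, (Yv σ * Gp σ μ ν * (v μ * v ν) + G σ ν * Yp μ σ * (v μ * v ν)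
          + G μ σ * Yp ν σ * (v μ * v ν))
          = (∑ ν, ∑ σ, Yv σ * Gp σ μ ν * (v μ * v ν))
            + (∑ ν, ∑ σ, G σ ν * Yp μ σ * (v μ * v ν))
            + (∑ ν, ∑ σ, G μ σ * Yp ν σ * (v μ * v ν)) := by
        intro μ; simp only [Finset.sum_add_distrib]
      simp only [this, Finset.sum_add_distrib]
    rw [← hT1B, ← hT1C] at e3
    have e5 : 2 * (w * ∑ μ, ∑ ν, G μ ν * v μ * v ν)
        = ∑ μ, ∑ ν, (2 * w * G μ ν) * (v μ * v ν) := by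
      simp only [Finset.mul_sum]
      exact Finset.sum_congr rfl fun μ _ => Finset.sum_congr rfl fun ν _ => by ring
    rw [e5, e3]; ring
  have hgoal : ∑ μ, ∑ ν, ((∑ σ, Yp σ μ * v σ) * G μ ν * v ν
      + Yv μ * (∑ σ, Gp σ μ ν * v σ) * v ν
      - Yv μ * G μ ν * (∑ κ, ∑ lam, Gam ν κ lam * v κ * v lam)) = T1 + T2 - T3 := by
    rw [hT1, hT2, hT3]
    simp only [Finset.sum_add_distrib, Finset.sum_sub_distrib]
  rw [hgoal, hT3']
  linarith

theorem stmt5 {N : ℕ}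
    (g ginv : (Fin N → ℝ) → Fin N → Fin N → ℝ)
    (hg_smooth : ∀ μ ν, ContDiff ℝ (⊤ : ℕ∞) (fun x => g x μ ν))
    (hg_symm : ∀ x μ ν, g x μ ν = g x ν μ)
    (hginv_smooth : ∀ μ ν, ContDiff ℝ (⊤ : ℕ∞) (fun x => ginv x μ ν))
    (h_inv : ∀ x μ ν, (∑ σ, g x μ σ * ginv x σ ν) = if μ = ν then (1 : ℝ) else 0)
    (Y : (Fin N → ℝ) → Fin N → ℝ) (ω : (Fin N → ℝ) → ℝ)
    (hY_smooth : ∀ μ, ContDiff ℝ (⊤ : ℕ∞) (fun x => Y x μ))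
    (hω_smooth : ContDiff ℝ (⊤ : ℕ∞) ω)
    (hCKV : ∀ x μ ν, lieD Y g x μ ν = 2 * ω x * g x μ ν)
    (m : ℝ) (a b : ℝ) (c : ℝ → Fin N → ℝ) (n : ℝ → ℝ)
    (hc : ∀ μ, ContDiffOn ℝ (⊤ : ℕ∞) (fun t => c t μ) (Set.Ioo a b))
    (hn : ContDiffOn ℝ (⊤ : ℕ∞) n (Set.Ioo a b))
    (hnpos : ∀ t ∈ Set.Ioo a b, 0 < n t)
    (hgeo : ∀ t ∈ Set.Ioo a b, ∀ μ,
      deriv (fun s => deriv (fun r => c r μ) s) t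
        + (∑ κ, ∑ σ, christoffel g ginv μ κ σ (c t)
            * deriv (fun s => c s κ) t * deriv (fun s => c s σ) t)
      = deriv (fun s => c s μ) t * deriv n t / n t)
    (hconstraint : ∀ t ∈ Set.Ioo a b,
      (∑ μ, ∑ ν, g (c t) μ ν * deriv (fun s => c s μ) t * deriv (fun s => c s ν) t)
        + m ^ 2 * n t ^ 2 = 0)
    (lam₀ : ℝ) (hlam₀ : lam₀ ∈ Set.Ioo a b) :
    ∀ t₁ ∈ Set.Ioo a b, ∀ t₂ ∈ Set.Ioo a b,
      (∑ μ, ∑ ν, Y (c t₁) μ * g (c t₁) μ ν * deriv (fun s => c s ν) t₁) / n t₁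
          + m ^ 2 * ∫ s in lam₀..t₁, n s * ω (c s)
      = (∑ μ, ∑ ν, Y (c t₂) μ * g (c t₂) μ ν * deriv (fun s => c s ν) t₂) / n t₂
          + m ^ 2 * ∫ s in lam₀..t₂, n s * ω (c s) := by
  have hIoo : IsOpen (Set.Ioo a b) := isOpen_Ioo
  have hco : Convex ℝ (Set.Ioo a b) := convex_Ioo a b
  have hcdiff : ∀ t ∈ Set.Ioo a b, ∀ μ, DifferentiableAt ℝ (fun s => c s μ) t :=
    fun t ht μ => ((hc μ).contDiffAt (hIoo.mem_nhds ht)).differentiableAt (by simp)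
  have hvCD : ∀ ν, ContDiffOn ℝ (⊤ : ℕ∞) (deriv (fun s => c s ν)) (Set.Ioo a b) :=
    fun ν => (hc ν).deriv_of_isOpen hIoo (by simp)
  have hvdiff : ∀ t ∈ Set.Ioo a b, ∀ ν, DifferentiableAt ℝ (deriv (fun s => c s ν)) t :=
    fun t ht ν => ((hvCD ν).contDiffAt (hIoo.mem_nhds ht)).differentiableAt (by simp)
  have hndiff : ∀ t ∈ Set.Ioo a b, DifferentiableAt ℝ n t :=
    fun t ht => (hn.contDiffAt (hIoo.mem_nhds ht)).differentiableAt (by simp)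
  have hcCont : ContinuousOn (fun s => n s * ω (c s)) (Set.Ioo a b) := by
    have h1 : ContinuousOn c (Set.Ioo a b) := continuousOn_pi.2 fun μ => (hc μ).continuousOn
    exact hn.continuousOn.mul (hω_smooth.continuous.comp_continuousOn h1)
  have hInt : ∀ t ∈ Set.Ioo a b,
      HasDerivAt (fun u => ∫ s in lam₀..u, n s * ω (c s)) (n t * ω (c t)) t := by
    intro t ht
    have hsub : Set.uIcc lam₀ t ⊆ Set.Ioo a b := Set.ordConnected_Ioo.uIcc_subset hlam₀ ht
    have hii : IntervalIntegrable (fun s => n s * ω (c s)) MeasureTheory.volume lam₀ t :=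
      (hcCont.mono hsub).intervalIntegrable
    exact intervalIntegral.integral_hasDerivAt_right hii
      (hcCont.stronglyMeasurableAtFilter hIoo t ht) (hcCont.continuousAt (hIoo.mem_nhds ht))
  set F : ℝ → ℝ := fun t =>
    (∑ μ, ∑ ν, Y (c t) μ * g (c t) μ ν * deriv (fun s => c s ν) t) / n t
      + m ^ 2 * ∫ s in lam₀..t, n s * ω (c s) with hF
  have hdF : ∀ t ∈ Set.Ioo a b, HasDerivAt F 0 t := by
    intro t ht
    have hn0 : n t ≠ 0 := (hnpos t ht).ne'
    -- derivative of numerator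
    have hP : HasDerivAt (fun s => ∑ μ, ∑ ν, Y (c s) μ * g (c s) μ ν * deriv (fun r => c r ν) s)
        (∑ μ, ∑ ν,
          (((∑ σ, pd (fun y => Y y μ) σ (c t) * deriv (fun s => c s σ) t) * g (c t) μ ν
              + Y (c t) μ * (∑ σ, pd (fun y => g y μ ν) σ (c t) * deriv (fun s => c s σ) t))
              * deriv (fun s => c s ν) t
            + Y (c t) μ * g (c t) μ ν * deriv (fun s => deriv (fun r => c r ν) s) t)) t := by
      refine HasDerivAt.fun_sum fun μ _ => HasDerivAt.fun_sum fun ν _ => ?_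
      have hY' := chainRule (hY_smooth μ) (hcdiff t ht)
      have hg' := chainRule (hg_smooth μ ν) (hcdiff t ht)
      have hv' : HasDerivAt (fun s => deriv (fun r => c r ν) s)
          (deriv (fun s => deriv (fun r => c r ν) s) t) t := (hvdiff t ht ν).hasDerivAt
      exact (hY'.mul hg').mul hv'
    have hQ := hP.div (hndiff t ht).hasDerivAt hn0
    have hT := hQ.add (HasDerivAt.const_mul (m ^ 2) (hInt t ht))
    -- now show the derivative value is zero
    have ha : ∀ ν, deriv (fun s => deriv (fun r => c r ν) s) t
        = deriv (fun s => c s ν) t * deriv n t / n t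
          - ∑ κ, ∑ σ, christoffel g ginv ν κ σ (c t)
              * deriv (fun s => c s κ) t * deriv (fun s => c s σ) t := by
      intro ν
      have := hgeo t ht ν
      linarith
    have hGpsym : ∀ σ μ ν : Fin N,
        pd (fun y => g y μ ν) σ (c t) = pd (fun y => g y ν μ) σ (c t) := by
      intro σ μ ν
      have he : (fun y => g y μ ν) = fun y => g y ν μ := funext fun y => hg_symm y μ ν
      rw [he]
    have hlie : ∀ μ ν : Fin N,
        (∑ σ, (Y (c t) σ * pd (fun y => g y μ ν) σ (c t)
          + g (c t) σ ν * pd (fun y => Y y σ) μ (c t)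
          + g (c t) μ σ * pd (fun y => Y y σ) ν (c t))) = 2 * ω (c t) * g (c t) μ ν := by
      intro μ ν
      have := hCKV (c t) μ ν
      simpa [lieD] using this
    have hKA : ∑ μ, ∑ ν,
        ((∑ σ, pd (fun y => Y y μ) σ (c t) * deriv (fun s => c s σ) t)
            * g (c t) μ ν * deriv (fun s => c s ν) t
          + Y (c t) μ * (∑ σ, pd (fun y => g y μ ν) σ (c t) * deriv (fun s => c s σ) t)
            * deriv (fun s => c s ν) t
          - Y (c t) μ * g (c t) μ ν * (∑ κ, ∑ lam, christoffel g ginv ν κ lam (c t)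
              * deriv (fun s => c s κ) t * deriv (fun s => c s lam) t))
        = ω (c t) * ∑ μ, ∑ ν, g (c t) μ ν * deriv (fun s => c s μ) t
            * deriv (fun s => c s ν) t :=
      keyAlg (fun μ ν => g (c t) μ ν) (fun σ μ ν => pd (fun y => g y μ ν) σ (c t))
      (fun σ => Y (c t) σ) (fun μ σ => pd (fun y => Y y σ) μ (c t))
      (fun ν κ lam => christoffel g ginv ν κ lam (c t)) (ω (c t))
      (fun σ => deriv (fun s => c s σ) t)
      (fun μ ν => hg_symm (c t) μ ν) hGpsym
      (fun μ κ lam => contractGamma g ginv (c t) (h_inv (c t)) μ κ lam) hlie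
    have hcon : ∑ μ, ∑ ν, g (c t) μ ν * deriv (fun s => c s μ) t * deriv (fun s => c s ν) t
        = -(m ^ 2 * n t ^ 2) := by
      have := hconstraint t ht
      linarith
    have hsum : (∑ μ, ∑ ν,
        (((∑ σ, pd (fun y => Y y μ) σ (c t) * deriv (fun s => c s σ) t) * g (c t) μ ν
            + Y (c t) μ * (∑ σ, pd (fun y => g y μ ν) σ (c t) * deriv (fun s => c s σ) t))
            * deriv (fun s => c s ν) t
          + Y (c t) μ * g (c t) μ ν * deriv (fun s => deriv (fun r => c r ν) s) t))
        = ω (c t) * -(m ^ 2 * n t ^ 2)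
          + (∑ μ, ∑ ν, Y (c t) μ * g (c t) μ ν * deriv (fun s => c s ν) t)
              * (deriv n t / n t) := by
      have hsummand : ∀ μ ν : Fin N,
          (((∑ σ, pd (fun y => Y y μ) σ (c t) * deriv (fun s => c s σ) t) * g (c t) μ ν
            + Y (c t) μ * (∑ σ, pd (fun y => g y μ ν) σ (c t) * deriv (fun s => c s σ) t))
            * deriv (fun s => c s ν) t
          + Y (c t) μ * g (c t) μ ν * deriv (fun s => deriv (fun r => c r ν) s) t)
          = ((∑ σ, pd (fun y => Y y μ) σ (c t) * deriv (fun s => c s σ) t)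
                * g (c t) μ ν * deriv (fun s => c s ν) t
              + Y (c t) μ * (∑ σ, pd (fun y => g y μ ν) σ (c t) * deriv (fun s => c s σ) t)
                * deriv (fun s => c s ν) t
              - Y (c t) μ * g (c t) μ ν * (∑ κ, ∑ lam, christoffel g ginv ν κ lam (c t)
                  * deriv (fun s => c s κ) t * deriv (fun s => c s lam) t))
            + (Y (c t) μ * g (c t) μ ν * deriv (fun s => c s ν) t) * (deriv n t / n t) := by
        intro μ ν
        rw [ha ν]
        ring
      rw [Finset.sum_congr rfl fun μ _ => Finset.sum_congr rfl fun ν _ => hsummand μ ν]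
      simp only [Finset.sum_add_distrib]
      rw [hKA, hcon]
      congr 1
      rw [Finset.sum_mul]
      exact Finset.sum_congr rfl fun μ _ => by rw [Finset.sum_mul]
    rw [hF]
    convert hT using 1
    · rfl
    · rfl
    · rfl
    rw [hsum]
    field_simp
    ring
  have hdiffOn : DifferentiableOn ℝ F (Set.Ioo a b) :=
    fun t ht => ((hdF t ht).differentiableAt).differentiableWithinAt
  have hfd0 : ∀ t ∈ Set.Ioo a b, fderivWithin ℝ F (Set.Ioo a b) t = 0 := by
    intro t ht
    rw [fderivWithin_of_isOpen hIoo ht, (hdF t ht).hasFDerivAt.fderiv]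
    refine ContinuousLinearMap.ext fun y => ?_
    simp
  intro t₁ ht₁ t₂ ht₂
  exact hco.is_const_of_fderivWithin_eq_zero hdiffOn hfd0 ht₁ ht₂
end
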